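/- arXiv:1406.7256 — 4 statements merged into one kernel-verified Lean document; each statement's English description precedes it below -/
import Mathlib

section
/- A rooted binary leaf-labelled tree on n ≥ 3 leaves is uniquely determined by its set of rooted triples, i.e., by the collection of its restrictions to all 3-element subsets of the leaf set. -/
/-- A rooted binary leaf-labelled tree on the label set `X`, encoded by its set of
clusters (sets of leaf labels below the vertices): a laminar family on `X`
containing `X` and all singletons, in which every cluster with at least two
elements is the disjoint union of exactly two proper subclusters. -/
def IsRBT (X : Finset ℕ) (C : Finset (Finset ℕ)) : Prop :=
  X ∈ C ∧ (∀ x ∈ X, {x} ∈ C) ∧ (∀ A ∈ C, A ⊆ X ∧ A.Nonempty) ∧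
  (∀ A ∈ C, ∀ B ∈ C, A ∩ B = ∅ ∨ A ⊆ B ∨ B ⊆ A) ∧
  (∀ A ∈ C, 2 ≤ A.card → ∃ B ∈ C, ∃ D ∈ C, Disjoint B D ∧ B ∪ D = A ∧ B ≠ A ∧ D ≠ A)

/-- The restriction `T|K` of a rooted leaf-labelled tree to a subset `K` of the
leaves, in cluster encoding: the nonempty intersections of clusters with `K`. -/
def restrictR (C : Finset (Finset ℕ)) (K : Finset ℕ) : Finset (Finset ℕ) :=
  (C.image (· ∩ K)).filter (·.Nonempty)

lemma laminar_contra {C : Finset (Finset ℕ)}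
    (hlam : ∀ A ∈ C, ∀ B ∈ C, A ∩ B = ∅ ∨ A ⊆ B ∨ B ⊆ A)
    {E F : Finset ℕ} (hE : E ∈ C) (hF : F ∈ C) {x y z : ℕ}
    (hxE : x ∈ E) (hxF : x ∈ F) (hyE : y ∈ E) (hyF : y ∉ F)
    (hzF : z ∈ F) (hzE : z ∉ E) : False := by
  rcases hlam E hE F hF with h1 | h2 | h3
  · have : x ∈ E ∩ F := Finset.mem_inter.mpr ⟨hxE, hxF⟩
    rw [h1] at this; exact absurd this (Finset.notMem_empty x)
  · exact hyF (h2 hyE)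
  · exact hzE (h3 hzF)

lemma mem_restrictR {C : Finset (Finset ℕ)} {K A : Finset ℕ} (hA : A ∈ C)
    (hne : (A ∩ K).Nonempty) : A ∩ K ∈ restrictR C K := by
  simp only [restrictR, Finset.mem_filter, Finset.mem_image]
  exact ⟨⟨A, hA, rfl⟩, hne⟩

lemma main_mem {X : Finset ℕ} {C' : Finset (Finset ℕ)} (hC' : IsRBT X C')
    {A : Finset ℕ} (hAX : A ⊆ X) (hA2 : 2 ≤ A.card)
    (htrip : ∀ a ∈ A, ∀ b ∈ A, a ≠ b → ∀ c ∈ X, c ∉ A →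
      ({a, b} : Finset ℕ) ∈ restrictR C' {a, b, c}) : A ∈ C' := by
  obtain ⟨hXC, hsing, hsub, hlam, hsplit⟩ := hC'
  set S := C'.filter (fun B => A ⊆ B) with hS
  have hSne : S.Nonempty := ⟨X, by simp [hS, hXC, hAX]⟩
  obtain ⟨B, hBS, hBmin⟩ := S.exists_min_image Finset.card hSne
  rw [hS, Finset.mem_filter] at hBS
  obtain ⟨hBC, hAB⟩ := hBS
  have hB2 : 2 ≤ B.card := le_trans hA2 (Finset.card_le_card hAB)
  obtain ⟨B1, hB1, B2, hB2', hdisj, hunion, hB1ne, hB2ne⟩ := hsplit B hBC hB2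
  have hB1B : B1 ⊆ B := hunion ▸ Finset.subset_union_left
  have hB2B : B2 ⊆ B := hunion ▸ Finset.subset_union_right
  have hmin : ∀ B' ∈ C', A ⊆ B' → B.card ≤ B'.card := by
    intro B' hB' hAB'
    exact hBmin B' (by simp [hS, hB', hAB'])
  -- A meets both B1 and B2
  have hmeet : ∀ (P Q : Finset ℕ), P ∈ C' → Q ∈ C' → P ∪ Q = B → Q ≠ B →
      (A ∩ P).Nonempty := by
    intro P Q hP hQ huni hQne
    by_contra hcon
    rw [Finset.not_nonempty_iff_eq_empty] at hcon
    have hAQ : A ⊆ Q := by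
      intro x hx
      have hxB : x ∈ B := hAB hx
      rw [← huni, Finset.mem_union] at hxB
      rcases hxB with hxP | hxQ
      · exact absurd (Finset.mem_inter.mpr ⟨hx, hxP⟩) (by simp [hcon])
      · exact hxQ
    have h1 : B.card ≤ Q.card := hmin Q hQ hAQ
    have hQB : Q ⊆ B := huni ▸ Finset.subset_union_right
    have h2 : Q.card < B.card := Finset.card_lt_card (hQB.ssubset_of_ne hQne)
    omega
  obtain ⟨a, ha⟩ := hmeet B1 B2 hB1 hB2' hunion hB2ne
  obtain ⟨b, hb⟩ := hmeet B2 B1 hB2' hB1 (by rw [Finset.union_comm]; exact hunion) hB1ne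
  rw [Finset.mem_inter] at ha hb
  obtain ⟨haA, haB1⟩ := ha
  obtain ⟨hbA, hbB2⟩ := hb
  have hab : a ≠ b := fun hh => (Finset.disjoint_left.mp hdisj haB1) (hh ▸ hbB2)
  -- show B ⊆ A
  have hBA : B ⊆ A := by
    intro c hcB
    by_contra hcA
    have hcX : c ∈ X := (hsub B hBC).1 hcB
    have htr := htrip a haA b hbA hab c hcX hcA
    simp only [restrictR, Finset.mem_filter, Finset.mem_image] at htr
    obtain ⟨⟨E, hE, hEK⟩, -⟩ := htr
    have haE : a ∈ E := by
      have : a ∈ E ∩ {a, b, c} := hEK ▸ (by simp)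
      exact (Finset.mem_inter.mp this).1
    have hbE : b ∈ E := by
      have : b ∈ E ∩ {a, b, c} := hEK ▸ (by simp)
      exact (Finset.mem_inter.mp this).1
    have hcE : c ∉ E := by
      intro hcE
      have : c ∈ E ∩ {a, b, c} := Finset.mem_inter.mpr ⟨hcE, by simp⟩
      rw [hEK, Finset.mem_insert, Finset.mem_singleton] at this
      rcases this with h | h
      · exact hcA (h ▸ haA)
      · exact hcA (h ▸ hbA)
    rw [← hunion, Finset.mem_union] at hcB
    rcases hcB with hc1 | hc2
    · exact laminar_contra hlam hE hB1 haE haB1 hbE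
        (Finset.disjoint_right.mp hdisj hbB2) hc1 hcE
    · exact laminar_contra hlam hE hB2' hbE hbB2 haE
        (Finset.disjoint_left.mp hdisj haB1) hc2 hcE
  have : A = B := Finset.Subset.antisymm hAB hBA
  exact this ▸ hBC

lemma subset_of_triples {X : Finset ℕ} {C C' : Finset (Finset ℕ)}
    (hC : IsRBT X C) (hC' : IsRBT X C')
    (h : ∀ K ⊆ X, K.card = 3 → restrictR C K = restrictR C' K) : C ⊆ C' := by
  intro A hA
  obtain ⟨hAX, hAne⟩ := hC.2.2.1 A hA
  by_cases hcard : 2 ≤ A.card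
  · by_cases hAeq : A = X
    · exact hAeq ▸ hC'.1
    · refine main_mem hC' hAX hcard ?_
      intro a haA b hbA hab c hcX hcA
      have hac : a ≠ c := fun hh => hcA (hh ▸ haA)
      have hbc : b ≠ c := fun hh => hcA (hh ▸ hbA)
      have hKX : ({a, b, c} : Finset ℕ) ⊆ X := by
        intro x hx
        simp only [Finset.mem_insert, Finset.mem_singleton] at hx
        rcases hx with rfl | rfl | rfl
        · exact hAX haA
        · exact hAX hbA
        · exact hcX
      have hK3 : ({a, b, c} : Finset ℕ).card = 3 := by
        rw [Finset.card_insert_of_notMem (by simp [hab, hac]),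
          Finset.card_insert_of_notMem (by simp [hbc]), Finset.card_singleton]
      rw [← h _ hKX hK3]
      have hint : A ∩ ({a, b, c} : Finset ℕ) = {a, b} := by
        ext x
        simp only [Finset.mem_inter, Finset.mem_insert, Finset.mem_singleton]
        constructor
        · rintro ⟨hxA, rfl | rfl | rfl⟩
          · exact Or.inl rfl
          · exact Or.inr rfl
          · exact absurd hxA hcA
        · rintro (rfl | rfl)
          · exact ⟨haA, Or.inl rfl⟩
          · exact ⟨hbA, Or.inr (Or.inl rfl)⟩
      exact hint ▸ mem_restrictR hA (hint ▸ ⟨a, by simp⟩)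
  · -- A is a singleton
    have hpos := Finset.card_pos.mpr hAne
    obtain ⟨x, hx⟩ := Finset.card_eq_one.mp (by omega : A.card = 1)
    exact hx ▸ hC'.2.1 x (hAX (hx ▸ Finset.mem_singleton_self x))


/-- A rooted binary leaf-labelled tree on `n ≥ 3` leaves is uniquely determined by
its rooted triples, i.e. by its restrictions to all 3-element subsets of the leaf set. -/
theorem rooted_tree_determined_by_triples (X : Finset ℕ) (hX : 3 ≤ X.card)
    (C C' : Finset (Finset ℕ)) (hC : IsRBT X C) (hC' : IsRBT X C')
    (h : ∀ K ⊆ X, K.card = 3 → restrictR C K = restrictR C' K) :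
    C = C' := by
  refine Finset.Subset.antisymm (subset_of_triples hC hC' h)
    (subset_of_triples hC' hC fun K hK hc => (h K hK hc).symm)
end

section
/- An unrooted binary leaf-labelled tree on n ≥ 4 leaves is uniquely determined by its set of splits, i.e., by the set of bipartitions of [n] induced by removing each edge. -/
/-!
For an edge `vw` let `side v w` be the set of leaves on `w`'s side. In a tree these sides are
nonempty and pairwise compatible, and because no vertex has degree 2, distinct oriented edges have
distinct sides. So a vertex `z` is determined by the set `sidesAt z` of sides pointing away from
it, and `z ~ y` iff some side at `z` is the complement of a side at `y`. It remains to see that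
`S` and `T` have the same sets `sidesAt`: an internal vertex of `S` has sides `A, B, C`; the split
`A` is a side at an internal vertex of `T` whose other two sides `B', C'` also partition `Aᶜ`, and
compatibility forces `{B, C} = {B', C'}`.
-/

/-- A binary (trivalent) leaf-labelled tree on `n` leaves: an unrooted tree whose
vertex set consists of `n` leaves (of degree 1, labelled by `Fin n`) and `n - 2`
internal vertices (of degree 3). -/
structure BinTree (n : ℕ) where
  G : SimpleGraph (Fin n ⊕ Fin (n - 2))
  isTree : G.IsTree
  degLeaf : ∀ i : Fin n, (G.neighborSet (Sum.inl i)).ncard = 1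
  degInternal : ∀ j : Fin (n - 2), (G.neighborSet (Sum.inr j)).ncard = 3

/-- Two binary leaf-labelled trees are the same tree when there is a graph
isomorphism between them fixing each leaf label. -/
def BinTree.LabelEquiv {n : ℕ} (T₁ T₂ : BinTree n) : Prop :=
  ∃ φ : T₁.G ≃g T₂.G, ∀ i : Fin n, φ (Sum.inl i) = Sum.inl i

/-- The splits of a binary leaf-labelled tree: for each edge `e` and each of its
two endpoints, the set of leaf labels lying on that endpoint's side of `e`
(i.e. reachable from that endpoint after deleting `e`). -/
def BinTree.splits {n : ℕ} (T : BinTree n) : Set (Set (Fin n)) :=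
  {A | ∃ e ∈ T.G.edgeSet, ∃ v, v ∈ e ∧
        A = {i : Fin n | (T.G.deleteEdges {e}).Reachable v (Sum.inl i)}}

/-- Compatibility of the splits `X | Xᶜ` and `Y | Yᶜ`: one of the four intersections is
empty. -/
def Compatible {α : Type*} (X Y : Set α) : Prop :=
  X ⊆ Y ∨ Y ⊆ X ∨ Disjoint X Y ∨ X ∪ Y = Set.univ

namespace Compatible

open Set

variable {α : Type*} {X Y B C B₂ B₃ : Set α}

theorem symm (h : Compatible X Y) : Compatible Y X := by
  rcases h with h | h | h | h
  · exact Or.inr (Or.inl h)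
  · exact Or.inl h
  · exact Or.inr (Or.inr (Or.inl h.symm))
  · exact Or.inr (Or.inr (Or.inr (union_comm X Y ▸ h)))

theorem preimage {β : Type*} (f : β → α) (h : Compatible X Y) :
    Compatible (f ⁻¹' X) (f ⁻¹' Y) := by
  rcases h with h | h | h | h
  · exact Or.inl (preimage_mono h)
  · exact Or.inr (Or.inl (preimage_mono h))
  · exact Or.inr (Or.inr (Or.inl (h.preimage f)))
  · exact Or.inr (Or.inr (Or.inr (by rw [← preimage_union, h, preimage_univ])))

theorem eq_and_eq_of_subset (hU : B ∪ C = B₂ ∪ B₃) (hU' : B ∪ C ≠ univ)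
    (hBC : Disjoint B C) (h₂₃ : Disjoint B₂ B₃) (hB : B.Nonempty) (hB₃ : B₃.Nonempty)
    (hC₂ : Compatible C B₂) (hsub : B ⊆ B₂) : B = B₂ ∧ C = B₃ := by
  obtain ⟨b, hb⟩ := hB
  obtain ⟨b₃, hb₃⟩ := hB₃
  have hB₂ : B₂ ⊆ B ∪ C := subset_union_left.trans hU.ge
  have hB₃C : B₃ ⊆ C :=
    Disjoint.left_le_of_le_sup_left (subset_union_right.trans hU.ge) (h₂₃.symm.mono_right hsub)
  rcases hC₂ with h | h | h | h
  · exact (disjoint_left.1 h₂₃ (h (hB₃C hb₃)) hb₃).elim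
  · exact (disjoint_left.1 hBC hb (h (hsub hb))).elim
  · have hCB₃ : C = B₃ :=
      (Disjoint.left_le_of_le_sup_left (subset_union_right.trans hU.le) h).antisymm hB₃C
    exact ⟨hsub.antisymm (Disjoint.left_le_of_le_sup_right hB₂ (hCB₃ ▸ h₂₃)), hCB₃⟩
  · exact (hU' (eq_univ_of_univ_subset (h ▸ union_subset subset_union_right hB₂))).elim

theorem pair_eq_pair (hU : B ∪ C = B₂ ∪ B₃) (hU' : B ∪ C ≠ univ) (hBC : Disjoint B C)
    (h₂₃ : Disjoint B₂ B₃) (hB : B.Nonempty) (hC : C.Nonempty) (hB₂ : B₂.Nonempty)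
    (hB₃ : B₃.Nonempty) (hB₂' : Compatible B B₂) (hB₃' : Compatible B B₃)
    (hC₂ : Compatible C B₂) (hC₃ : Compatible C B₃) :
    ({B, C} : Set (Set α)) = {B₂, B₃} := by
  rcases hB₂' with h | h | h | h
  · obtain ⟨rfl, rfl⟩ := eq_and_eq_of_subset hU hU' hBC h₂₃ hB hB₃ hC₂ h
    rfl
  · obtain ⟨rfl, rfl⟩ :=
      eq_and_eq_of_subset hU.symm (hU ▸ hU') h₂₃ hBC hB₂ hC hB₃'.symm h
    rfl
  · have hB₃ : B ⊆ B₃ := Disjoint.left_le_of_le_sup_left (subset_union_left.trans hU.le) h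
    obtain ⟨rfl, rfl⟩ :=
      eq_and_eq_of_subset (union_comm B₂ B₃ ▸ hU) hU' hBC h₂₃.symm hB hB₂ hC₃ hB₃
    exact pair_comm _ _
  · exact (hU' (eq_univ_of_univ_subset (h ▸ union_subset subset_union_left
      (subset_union_left.trans hU.ge)))).elim

end Compatible

namespace SimpleGraph

variable {V : Type*} {G : SimpleGraph V} {v w x y z : V}

def branch (G : SimpleGraph V) (v w : V) : Set V :=
  {z | (G.deleteEdges {s(v, w)}).Reachable w z}

theorem mem_branch_self (G : SimpleGraph V) (v w : V) : w ∈ G.branch v w :=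
  Reachable.refl w

theorem mem_branch_iff_of_adj (h : G.Adj x y) (hne : s(x, y) ≠ s(v, w)) :
    x ∈ G.branch v w ↔ y ∈ G.branch v w :=
  have hxy : (G.deleteEdges {s(v, w)}).Adj x y := (deleteEdges_adj ..).2 ⟨h, hne⟩
  ⟨fun hx => hx.trans hxy.reachable, fun hy => hy.trans hxy.symm.reachable⟩

theorem IsAcyclic.notMem_branch (hG : G.IsAcyclic) (h : G.Adj v w) : v ∉ G.branch v w :=
  fun hv => isBridge_iff.1 (isAcyclic_iff_forall_isBridge.1 hG h) hv.symm

theorem Reachable.mem_branch_or (hz : G.Reachable z v) (w : V) :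
    z ∈ G.branch v w ∨ z ∈ G.branch w v := by
  obtain ⟨p⟩ := hz
  induction p with
  | nil => exact Or.inr (mem_branch_self ..)
  | @cons a b c hab _ ih =>
    by_cases he : s(a, b) = s(c, w)
    · rcases Sym2.eq_iff.1 he with ⟨rfl, -⟩ | ⟨rfl, -⟩
      · exact Or.inr (mem_branch_self ..)
      · exact Or.inl (mem_branch_self ..)
    · rwa [mem_branch_iff_of_adj hab he,
        mem_branch_iff_of_adj hab fun h => he (h.trans Sym2.eq_swap)]

theorem IsTree.compl_branch (hG : G.IsTree) (h : G.Adj v w) : (G.branch v w)ᶜ = G.branch w v := by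
  ext z
  refine ⟨fun hz => ((hG.preconnected z v).mem_branch_or w).resolve_left hz, fun hz hz' => ?_⟩
  rw [branch, Sym2.eq_swap] at hz
  exact hG.isAcyclic.notMem_branch h (hz'.trans hz.symm)

theorem reachable_deleteEdges_of_notMem_branch (hx : x ∉ G.branch v w) (y : V)
    (hz : z ∈ G.branch v w) :
    (G.deleteEdges {s(x, y)}).Reachable z w := by
  suffices ∀ {c} (p : (G.deleteEdges {s(v, w)}).Walk z c),
      (G.deleteEdges {s(x, y)}).Reachable z c from this hz.some.reverse
  intro c p
  induction p with
  | nil => rfl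
  | @cons a b c hab q ih =>
    have hb : b ∈ G.branch v w := hz.trans hab.reachable
    have hne : s(a, b) ∉ ({s(x, y)} : Set _) := fun he => by
      rcases Sym2.eq_iff.1 he with ⟨rfl, -⟩ | ⟨-, rfl⟩
      · exact hx hz
      · exact hx hb
    exact ((deleteEdges_adj ..).2 ⟨((deleteEdges_adj ..).1 hab).1, hne⟩).reachable.trans (ih hb)

theorem IsTree.branch_subset_or_disjoint (hG : G.IsTree) (hxy : G.Adj x y)
    (hx : x ∉ G.branch v w) :
    G.branch v w ⊆ G.branch x y ∨ Disjoint (G.branch v w) (G.branch x y) := by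
  have hreach := fun z => reachable_deleteEdges_of_notMem_branch (z := z) hx y
  rcases (hG.preconnected w x).mem_branch_or y with hw | hw
  · exact Or.inl fun z hz => hw.trans (hreach z hz).symm
  · refine Or.inr (Set.disjoint_left.2 fun z hz => ?_)
    rw [← Set.mem_compl_iff, hG.compl_branch hxy]
    change (G.deleteEdges {s(y, x)}).Reachable x w at hw
    change (G.deleteEdges {s(y, x)}).Reachable x z
    rw [Sym2.eq_swap] at hw ⊢
    exact hw.trans (hreach z hz).symm

theorem Preconnected.exists_adj_mem_branch (hG : G.Preconnected) (hz : z ≠ v) :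
    ∃ w, G.Adj v w ∧ z ∈ G.branch v w := by
  obtain ⟨p⟩ := hG z v
  induction p with
  | nil => exact absurd rfl hz
  | @cons a b c hab _ ih =>
    by_cases hb : b = c
    · exact ⟨a, hb ▸ hab.symm, mem_branch_self ..⟩
    obtain ⟨w, hcw, hbw⟩ := ih hb
    refine ⟨w, hcw, (mem_branch_iff_of_adj hab fun he => ?_).2 hbw⟩
    rcases Sym2.eq_iff.1 he with ⟨rfl, -⟩ | ⟨-, rfl⟩
    · exact hz rfl
    · exact hb rfl

theorem IsTree.disjoint_branch (hG : G.IsTree) (hv : G.Adj v x) (hy : G.Adj v y) (hxy : x ≠ y) :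
    Disjoint (G.branch v x) (G.branch v y) := by
  refine (hG.branch_subset_or_disjoint hy (hG.isAcyclic.notMem_branch hv)).resolve_left
    fun hsub => hG.isAcyclic.notMem_branch hy ?_
  refine (mem_branch_iff_of_adj hv fun he => hxy ?_).2 (hsub (mem_branch_self ..))
  exact Sym2.congr_right.1 he

theorem IsTree.branch_ssubset_branch (hG : G.IsTree) (hvw : G.Adj v w) (hwx : G.Adj w x)
    (hxv : x ≠ v) :
    G.branch w x ⊂ G.branch v w := by
  have hne : s(w, x) ≠ s(v, w) := fun he => hxv (Sym2.congr_right.1 (he.trans Sym2.eq_swap))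
  have hv : v ∉ G.branch w x := fun hv =>
    hG.isAcyclic.notMem_branch hwx ((mem_branch_iff_of_adj hvw hne.symm).1 hv)
  refine Set.ssubset_iff_subset_ne.2 ⟨?_, fun he => hG.isAcyclic.notMem_branch hwx ?_⟩
  · refine ((hG.branch_subset_or_disjoint hvw hv).resolve_right fun hd => ?_)
    exact Set.disjoint_left.1 hd (mem_branch_self ..)
      ((mem_branch_iff_of_adj hwx hne).1 (mem_branch_self ..))
  · exact he ▸ mem_branch_self ..

theorem IsTree.compatible_branch (hG : G.IsTree) (hvw : G.Adj v w) (hxy : G.Adj x y) :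
    Compatible (G.branch v w) (G.branch x y) := by
  by_cases hx : x ∈ G.branch v w
  · rw [← Set.notMem_compl_iff, hG.compl_branch hvw] at hx
    rcases hG.branch_subset_or_disjoint hxy hx with h | h
    · rw [← hG.compl_branch hvw, Set.compl_subset_iff_union] at h
      exact Or.inr (Or.inr (Or.inr h))
    · rw [← hG.compl_branch hvw, Set.disjoint_compl_left_iff_subset] at h
      exact Or.inr (Or.inl h)
  · rcases hG.branch_subset_or_disjoint hxy hx with h | h
    · exact Or.inl h
    · exact Or.inr (Or.inr (Or.inl h))

theorem branch_eq_singleton (h : ∀ t, G.Adj x t → t = w) : G.branch w x = {x} := by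
  ext z
  refine ⟨fun ⟨p⟩ => ?_, fun hz => hz ▸ mem_branch_self ..⟩
  cases p with
  | nil => rfl
  | cons hadj _ =>
    obtain ⟨hadj, hne⟩ := (deleteEdges_adj ..).1 hadj
    exact (hne (by rw [h _ hadj, Sym2.eq_swap]; rfl)).elim

end SimpleGraph

namespace BinTree

open SimpleGraph

variable {n : ℕ} (T : BinTree n)

def side (v w : Fin n ⊕ Fin (n - 2)) : Set (Fin n) := Sum.inl ⁻¹' T.G.branch v w

def sidesAt (z : Fin n ⊕ Fin (n - 2)) : Set (Set (Fin n)) := T.side z '' T.G.neighborSet z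

variable {T} {i : Fin n} {j : Fin (n - 2)} {a v w x y z : Fin n ⊕ Fin (n - 2)}

theorem mem_splits_iff {A : Set (Fin n)} :
    A ∈ T.splits ↔ ∃ v w, T.G.Adj v w ∧ A = T.side v w := by
  constructor
  · rintro ⟨e, he, u, hu, rfl⟩
    induction e using Sym2.ind with
    | _ a b =>
      rcases Sym2.mem_iff.1 hu with rfl | rfl
      · exact ⟨b, u, (T.G.mem_edgeSet.1 he).symm, by rw [side, branch, Sym2.eq_swap]; rfl⟩
      · exact ⟨a, u, he, rfl⟩
  · rintro ⟨v, w, h, rfl⟩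
    exact ⟨s(v, w), h, w, Sym2.mem_mk_right v w, rfl⟩

theorem compl_side (h : T.G.Adj v w) : (T.side v w)ᶜ = T.side w v := by
  rw [side, ← Set.preimage_compl, T.isTree.compl_branch h]
  rfl

theorem compatible_of_mem_splits {A B : Set (Fin n)} (hA : A ∈ T.splits) (hB : B ∈ T.splits) :
    Compatible A B := by
  obtain ⟨v, w, hvw, rfl⟩ := mem_splits_iff.1 hA
  obtain ⟨x, y, hxy, rfl⟩ := mem_splits_iff.1 hB
  exact (T.isTree.compatible_branch hvw hxy).preimage Sum.inl

theorem eq_of_adj_inl (hx : T.G.Adj (Sum.inl i) x) (hy : T.G.Adj (Sum.inl i) y) : x = y :=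
  (Set.ncard_le_one_iff (Set.toFinite _)).1 (T.degLeaf i).le hx hy

theorem exists_adj_ne (j : Fin (n - 2)) (p q : Fin n ⊕ Fin (n - 2)) :
    ∃ t, T.G.Adj (Sum.inr j) t ∧ t ≠ p ∧ t ≠ q := by
  have hlt : ({p, q} : Set _).ncard < (T.G.neighborSet (Sum.inr j)).ncard :=
    T.degInternal j ▸ (Set.ncard_insert_le p {q}).trans_lt (by simp)
  obtain ⟨t, ht, htpq⟩ := Set.exists_mem_notMem_of_ncard_lt_ncard hlt
  exact ⟨t, ht, fun h => htpq (Or.inl h), fun h => htpq (Or.inr h)⟩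

theorem exists_adj (z : Fin n ⊕ Fin (n - 2)) : ∃ w, T.G.Adj z w := by
  cases z with
  | inl i => exact Set.nonempty_of_ncard_ne_zero (s := T.G.neighborSet _) (by simp [T.degLeaf i])
  | inr j => exact (T.exists_adj_ne j (.inr j) (.inr j)).imp fun _ h => h.1

theorem neighborSet_inr_eq (h : T.G.Adj (Sum.inr j) a) :
    ∃ b c, a ≠ b ∧ a ≠ c ∧ b ≠ c ∧ T.G.neighborSet (Sum.inr j) = {a, b, c} := by
  have h2 : (T.G.neighborSet (Sum.inr j) \ {a}).ncard = 2 := by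
    rw [Set.ncard_sdiff_singleton_of_mem ((T.G.mem_neighborSet _ _).2 h), T.degInternal j]
  obtain ⟨b, c, hbc, hN⟩ := Set.ncard_eq_two.1 h2
  have hb : b ∈ T.G.neighborSet (Sum.inr j) \ {a} := hN ▸ Or.inl rfl
  have hc : c ∈ T.G.neighborSet (Sum.inr j) \ {a} := hN ▸ Or.inr rfl
  refine ⟨b, c, fun h => hb.2 h.symm, fun h => hc.2 h.symm, hbc, ?_⟩
  rw [← hN, Set.insert_sdiff_singleton, Set.insert_eq_of_mem ((T.G.mem_neighborSet _ _).2 h)]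

theorem side_inl (h : T.G.Adj (Sum.inl i) w) : T.side (Sum.inl i) w = {i}ᶜ := by
  rw [← compl_side h.symm, side, branch_eq_singleton fun t ht => eq_of_adj_inl ht h]
  ext k
  simp

theorem sidesAt_inl (i : Fin n) : T.sidesAt (Sum.inl i) = {{i}ᶜ} := by
  obtain ⟨w, hw⟩ := T.exists_adj (Sum.inl i)
  have hN : T.G.neighborSet (Sum.inl i) = {w} :=
    Set.eq_singleton_iff_unique_mem.2 ⟨hw, fun _ ht => eq_of_adj_inl ht hw⟩
  rw [sidesAt, hN, Set.image_singleton, side_inl hw]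

theorem side_nonempty {v w : Fin n ⊕ Fin (n - 2)} (h : T.G.Adj v w) : (T.side v w).Nonempty := by
  cases w with
  | inl i => exact ⟨i, mem_branch_self ..⟩
  | inr j =>
    obtain ⟨t, ht, htv, -⟩ := T.exists_adj_ne j v v
    have hlt := T.isTree.branch_ssubset_branch h ht htv
    have : (T.G.branch (.inr j) t).ncard < (T.G.branch v (.inr j)).ncard :=
      Set.ncard_lt_ncard hlt
    exact (side_nonempty ht).mono (Set.preimage_mono hlt.subset)
termination_by (T.G.branch v w).ncard

/-- Descend from `vw` towards `xy` through ever smaller branches. Once `w = x`, the third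
neighbour of `w` carries leaves of `side v w` outside `side x y`. -/
theorem not_side_subset_side {v w x y : Fin n ⊕ Fin (n - 2)} (hvw : T.G.Adj v w)
    (hxy : T.G.Adj x y) (hsub : T.G.branch x y ⊆ T.G.branch v w) (hne : (x, y) ≠ (v, w)) :
    ¬T.side v w ⊆ T.side x y := by
  have hT := T.isTree
  have hv : v ∉ T.G.branch x y := fun h => hT.isAcyclic.notMem_branch hvw (hsub h)
  have hw : w ∉ T.G.branch x y := by
    intro hw
    by_cases he : s(v, w) = s(x, y)
    · rcases Sym2.eq_iff.1 he with ⟨rfl, rfl⟩ | ⟨rfl, rfl⟩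
      · exact hne rfl
      · exact hT.isAcyclic.notMem_branch hxy hw
    · exact hv ((mem_branch_iff_of_adj hvw he).2 hw)
  by_cases hxw : x = w
  · subst hxw
    have hyv : y ≠ v := by
      rintro rfl
      exact hv (mem_branch_self ..)
    cases x with
    | inl i => exact (hyv (eq_of_adj_inl hxy hvw.symm)).elim
    | inr j =>
      obtain ⟨t, hxt, htv, hty⟩ := T.exists_adj_ne j v y
      obtain ⟨k, hk⟩ := side_nonempty hxt
      refine fun h => Set.disjoint_left.1 ((hT.disjoint_branch hxt hxy hty).preimage Sum.inl) hk
        (h ((Set.preimage_mono (hT.branch_ssubset_branch hvw hxt htv).subset) hk))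
  · obtain ⟨t, hwt, hxt⟩ := hT.preconnected.exists_adj_mem_branch hxw
    have hxvw : x ∈ T.G.branch v w := by
      refine (mem_branch_iff_of_adj hxy fun he => ?_).2 (hsub (mem_branch_self ..))
      rcases Sym2.eq_iff.1 he with ⟨rfl, rfl⟩ | ⟨rfl, -⟩
      · exact hne rfl
      · exact hxw rfl
    have htv : t ≠ v := by
      rintro rfl
      rw [← hT.compl_branch hvw] at hxt
      exact hxt hxvw
    have hyt : y ∈ T.G.branch w t := by
      refine (mem_branch_iff_of_adj hxy fun he => ?_).1 hxt
      rcases Sym2.eq_iff.1 he with ⟨rfl, -⟩ | ⟨-, rfl⟩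
      · exact hxw rfl
      · exact hw (mem_branch_self ..)
    have hsub' : T.G.branch x y ⊆ T.G.branch w t :=
      (hT.branch_subset_or_disjoint hwt hw).resolve_right
        fun hd => Set.disjoint_left.1 hd (mem_branch_self ..) hyt
    have hlt := hT.branch_ssubset_branch hvw hwt htv
    have : (T.G.branch w t).ncard < (T.G.branch v w).ncard := Set.ncard_lt_ncard hlt
    exact fun h => not_side_subset_side hwt hxy hsub' (fun he => hxw (Prod.mk.inj he).1)
      ((Set.preimage_mono hlt.subset).trans h)
termination_by (T.G.branch v w).ncard

theorem eq_and_eq_of_side_eq (hvw : T.G.Adj v w) (hxy : T.G.Adj x y)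
    (h : T.side v w = T.side x y) : v = x ∧ w = y := by
  by_contra hne
  rcases T.isTree.compatible_branch hvw hxy with hsub | hsub | hdis | hcov
  · exact not_side_subset_side hxy hvw hsub (fun he => hne (Prod.mk.inj he)) h.ge
  · exact not_side_subset_side hvw hxy hsub (fun he => hne (Prod.mk.inj he.symm)) h.le
  · obtain ⟨i, hi⟩ := side_nonempty hvw
    exact Set.disjoint_left.1 hdis hi (h ▸ hi : i ∈ T.side x y)
  · obtain ⟨i, hi⟩ := side_nonempty hvw.symm
    rw [← compl_side hvw] at hi
    have hixy : Sum.inl i ∈ T.G.branch x y := (hcov.ge (Set.mem_univ _)).resolve_left hi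
    exact hi (h ▸ hixy : i ∈ T.side v w)

variable (T) in
theorem sidesAt_injective : Function.Injective T.sidesAt := by
  intro z z' h
  obtain ⟨w, hw⟩ := T.exists_adj z
  obtain ⟨w', hw', he⟩ : T.side z w ∈ T.sidesAt z' := h ▸ ⟨w, hw, rfl⟩
  exact (eq_and_eq_of_side_eq hw' hw he).1.symm

theorem adj_iff_sidesAt : T.G.Adj z y ↔ ∃ A ∈ T.sidesAt z, Aᶜ ∈ T.sidesAt y := by
  refine ⟨fun h => ⟨_, ⟨y, h, rfl⟩, z, h.symm, (compl_side h).symm⟩, ?_⟩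
  rintro ⟨_, ⟨w, hw, rfl⟩, u, hu, he⟩
  rw [compl_side hw] at he
  exact (eq_and_eq_of_side_eq hu hw.symm he).1 ▸ hw

theorem disjoint_side (hb : T.G.Adj v x) (hc : T.G.Adj v y) (hxy : x ≠ y) :
    Disjoint (T.side v x) (T.side v y) :=
  (T.isTree.disjoint_branch hb hc hxy).preimage _

variable {b c : Fin n ⊕ Fin (n - 2)}

theorem sidesAt_inr (hN : T.G.neighborSet (Sum.inr j) = {a, b, c}) :
    T.sidesAt (Sum.inr j) = {T.side (.inr j) a, T.side (.inr j) b, T.side (.inr j) c} := by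
  rw [sidesAt, hN, Set.image_insert_eq, Set.image_pair]

theorem compl_side_eq_union (hN : T.G.neighborSet (Sum.inr j) = {a, b, c}) (hab : a ≠ b)
    (hac : a ≠ c) : (T.side (.inr j) a)ᶜ = T.side (.inr j) b ∪ T.side (.inr j) c := by
  have hadj : ∀ t, T.G.Adj (.inr j) t ↔ t = a ∨ t = b ∨ t = c := fun t => by
    rw [← T.G.mem_neighborSet, hN]
    rfl
  ext k
  constructor
  · intro hk
    obtain ⟨t, ht, hkt⟩ :=
      T.isTree.preconnected.exists_adj_mem_branch (Sum.inl_ne_inr (a := k) (b := j))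
    rcases (hadj t).1 ht with rfl | rfl | rfl
    · exact (hk hkt).elim
    · exact Or.inl hkt
    · exact Or.inr hkt
  · have ha := (hadj a).2 (Or.inl rfl)
    rintro (hk | hk) hka
    · exact Set.disjoint_left.1 (disjoint_side ha ((hadj b).2 (by simp)) hab) hka hk
    · exact Set.disjoint_left.1 (disjoint_side ha ((hadj c).2 (by simp)) hac) hka hk

theorem side_ne_compl_singleton (hN : T.G.neighborSet (Sum.inr j) = {a, b, c}) (hab : a ≠ b)
    (hac : a ≠ c) (hbc : b ≠ c) (i : Fin n) : T.side (.inr j) a ≠ {i}ᶜ := by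
  intro he
  have hadj : ∀ {t}, t ∈ ({b, c} : Set _) → T.G.Adj (.inr j) t := fun ht =>
    (T.G.mem_neighborSet _ _).1 (hN ▸ Or.inr ht)
  have hb := hadj (Or.inl rfl)
  have hc := hadj (Or.inr rfl)
  have hBC := compl_side_eq_union hN hab hac
  rw [he, compl_compl] at hBC
  have hB := (side_nonempty hb).subset_singleton_iff.1 (hBC ▸ Set.subset_union_left)
  have hC := (side_nonempty hc).subset_singleton_iff.1 (hBC ▸ Set.subset_union_right)
  exact Set.disjoint_singleton.1 (hB ▸ hC ▸ disjoint_side hb hc hbc) rfl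

theorem sidesAt_inr_eq {S : BinTree n} (h : S.splits = T.splits) {k : Fin (n - 2)}
    {b' c' : Fin n ⊕ Fin (n - 2)} (hN : S.G.neighborSet (Sum.inr j) = {a, b, c})
    (hN' : T.G.neighborSet (Sum.inr k) = {y, b', c'}) (hab : a ≠ b) (hac : a ≠ c)
    (hbc : b ≠ c) (hyb : y ≠ b') (hyc : y ≠ c') (hbc' : b' ≠ c')
    (hA : S.side (.inr j) a = T.side (.inr k) y) :
    T.sidesAt (Sum.inr k) = S.sidesAt (Sum.inr j) := by
  have hadj : ∀ {t}, t ∈ ({a, b, c} : Set _) → S.G.Adj (.inr j) t := fun ht =>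
    (S.G.mem_neighborSet _ _).1 (hN ▸ ht)
  have hadj' : ∀ {t}, t ∈ ({b', c'} : Set _) → T.G.Adj (.inr k) t := fun ht =>
    (T.G.mem_neighborSet _ _).1 (hN' ▸ Or.inr ht)
  have ha := hadj (Or.inl rfl)
  have hb := hadj (Or.inr (Or.inl rfl))
  have hc := hadj (Or.inr (Or.inr rfl))
  have hb' := hadj' (Or.inl rfl)
  have hc' := hadj' (Or.inr rfl)
  have hsplit : ∀ {t}, S.G.Adj (.inr j) t → S.side (.inr j) t ∈ T.splits :=
    fun ht => h ▸ mem_splits_iff.2 ⟨_, _, ht, rfl⟩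
  have hsplit' : ∀ {t}, T.G.Adj (.inr k) t → T.side (.inr k) t ∈ T.splits :=
    fun ht => mem_splits_iff.2 ⟨_, _, ht, rfl⟩
  have hBC := compl_side_eq_union hN hab hac
  rw [sidesAt_inr hN, sidesAt_inr hN', ← hA, Compatible.pair_eq_pair
    (by rw [← hBC, hA, compl_side_eq_union hN' hyb hyc])
    (by rw [← hBC]; exact fun hu => (side_nonempty ha).ne_empty (Set.compl_univ_iff.1 hu))
    (disjoint_side hb hc hbc) (disjoint_side hb' hc' hbc')
    (side_nonempty hb) (side_nonempty hc) (side_nonempty hb') (side_nonempty hc')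
    (T.compatible_of_mem_splits (hsplit hb) (hsplit' hb'))
    (T.compatible_of_mem_splits (hsplit hb) (hsplit' hc'))
    (T.compatible_of_mem_splits (hsplit hc) (hsplit' hb'))
    (T.compatible_of_mem_splits (hsplit hc) (hsplit' hc'))]

theorem exists_sidesAt_eq {S : BinTree n} (h : S.splits = T.splits) (z : Fin n ⊕ Fin (n - 2)) :
    ∃ z', T.sidesAt z' = S.sidesAt z := by
  cases z with
  | inl i => exact ⟨.inl i, by rw [sidesAt_inl, sidesAt_inl]⟩
  | inr j =>
    obtain ⟨a, ha⟩ := S.exists_adj (.inr j)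
    obtain ⟨b, c, hab, hac, hbc, hN⟩ := S.neighborSet_inr_eq ha
    obtain ⟨x, y, hxy, hA⟩ := mem_splits_iff.1 (h ▸ mem_splits_iff.2 ⟨_, _, ha, rfl⟩)
    cases x with
    | inl i => exact (side_ne_compl_singleton hN hab hac hbc i (hA.trans (side_inl hxy))).elim
    | inr k =>
      obtain ⟨b', c', hyb, hyc, hbc', hN'⟩ := T.neighborSet_inr_eq hxy
      exact ⟨.inr k, sidesAt_inr_eq h hN hN' hab hac hbc hyb hyc hbc' hA⟩

end BinTree

theorem tree_determined_by_splits_general (n : ℕ) (S T : BinTree n)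
    (h : S.splits = T.splits) : S.LabelEquiv T := by
  choose f hf using BinTree.exists_sidesAt_eq h
  choose g hg using BinTree.exists_sidesAt_eq h.symm
  have hgf : ∀ z, g (f z) = z := fun z => S.sidesAt_injective ((hg _).trans (hf z))
  have hfg : ∀ z, f (g z) = z := fun z => T.sidesAt_injective ((hf _).trans (hg z))
  refine ⟨⟨⟨f, g, hgf, hfg⟩, ?_⟩, fun i => T.sidesAt_injective ?_⟩
  · simp only [Equiv.coe_fn_mk, BinTree.adj_iff_sidesAt, hf, implies_true]
  · exact (hf (.inl i)).trans (by rw [BinTree.sidesAt_inl, BinTree.sidesAt_inl])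

/-- An unrooted binary leaf-labelled tree on `n ≥ 4` leaves is uniquely
determined by its set of splits. -/
theorem tree_determined_by_splits (n : ℕ) (hn : 4 ≤ n) (S T : BinTree n)
    (h : S.splits = T.splits) : S.LabelEquiv T :=
  tree_determined_by_splits_general n S T h
end

section
/- For every r ∈ ℕ, the rooted disentangling number satisfies RD(r) = 3(⌊log₂ r⌋ + 1); in particular, for any two distinct unordered r-multisets S ≠ T of rooted binary leaf-labelled trees on a common leaf set X, there exists K ⊆ X with |K| ≤ 3(⌊log₂ r⌋ + 1) such that the multisets of restrictions S|K and T|K differ. -/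
/-- `K` disentangles the multisets `S` and `T` of rooted trees if the multisets
of restrictions to `K` differ. -/
def RDisentangles (S T : Multiset (Finset (Finset ℕ))) (K : Finset ℕ) : Prop :=
  S.map (fun C => restrictR C K) ≠ T.map (fun C => restrictR C K)

/-- The minimum cardinality of a disentangling set for two multisets of rooted
trees on the leaf set `X`. -/
noncomputable def rootedDisentDist (X : Finset ℕ) (S T : Multiset (Finset (Finset ℕ))) : ℕ :=
  sInf {m | ∃ K ⊆ X, K.card = m ∧ RDisentangles S T K}

/-- The rooted disentangling number `RD(r)`: the maximum over all `n` and all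
pairs of distinct `r`-multisets of rooted binary leaf-labelled trees on `[n]`
of the minimum cardinality of a disentangling set. -/
noncomputable def RD (r : ℕ) : ℕ :=
  sSup {d | ∃ n : ℕ, ∃ S T : Multiset (Finset (Finset ℕ)),
    Multiset.card S = r ∧ Multiset.card T = r ∧
    (∀ C ∈ S, IsRBT (Finset.range n) C) ∧ (∀ C ∈ T, IsRBT (Finset.range n) C) ∧
    S ≠ T ∧ d = rootedDisentDist (Finset.range n) S T}


-- ## Auxiliary development

lemma mem_restrictR_s7 {C : Finset (Finset ℕ)} {K E : Finset ℕ} :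
    E ∈ restrictR C K ↔ (∃ A ∈ C, A ∩ K = E) ∧ E.Nonempty := by
  simp [restrictR, Finset.mem_filter, Finset.mem_image]

lemma restrict_restrict {C : Finset (Finset ℕ)} {K K' : Finset ℕ} (h : K' ⊆ K) :
    restrictR (restrictR C K) K' = restrictR C K' := by
  ext E
  simp only [mem_restrictR_s7]
  constructor
  · rintro ⟨⟨F, ⟨⟨A, hA, rfl⟩, hFne⟩, rfl⟩, hne⟩
    exact ⟨⟨A, hA, by rw [Finset.inter_assoc, Finset.inter_eq_right.mpr h]⟩, hne⟩
  · rintro ⟨⟨A, hA, rfl⟩, hne⟩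
    refine ⟨⟨A ∩ K, ⟨⟨A, hA, rfl⟩, ?_⟩, by rw [Finset.inter_assoc, Finset.inter_eq_right.mpr h]⟩, hne⟩
    obtain ⟨x, hx⟩ := hne
    exact ⟨x, Finset.mem_inter.mpr ⟨(Finset.mem_inter.mp hx).1,
      h (Finset.mem_inter.mp hx).2⟩⟩

lemma restrict_full {C : Finset (Finset ℕ)} {X : Finset ℕ}
    (h : ∀ A ∈ C, A ⊆ X ∧ A.Nonempty) : restrictR C X = C := by
  ext E
  simp only [mem_restrictR_s7]
  constructor
  · rintro ⟨⟨A, hA, rfl⟩, hne⟩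
    rwa [Finset.inter_eq_left.mpr (h A hA).1]
  · intro hE
    exact ⟨⟨E, hE, Finset.inter_eq_left.mpr (h E hE).1⟩, (h E hE).2⟩

/-- The triple lemma: two distinct rooted binary trees on `X` differ on some
subset of `X` of size at most 3. -/
lemma tripleA_aux {X : Finset ℕ} {C C' : Finset (Finset ℕ)}
    (h : IsRBT X C) (h' : IsRBT X C') {A : Finset ℕ} (hAC : A ∈ C) (hAC' : A ∉ C') :
    ∃ Y ⊆ X, Y.card ≤ 3 ∧ restrictR C Y ≠ restrictR C' Y := by
  obtain ⟨hAX, hAne⟩ := h.2.2.1 A hAC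
  -- A has at least 2 elements
  have hA2 : 2 ≤ A.card := by
    rcases Nat.lt_or_ge A.card 2 with hlt | hge
    · interval_cases hc : A.card
      · exact absurd (Finset.card_eq_zero.mp hc ▸ hAne) (by simp)
      · obtain ⟨x, rfl⟩ := Finset.card_eq_one.mp hc
        exact absurd (h'.2.1 x (hAX (Finset.mem_singleton_self x))) hAC'
    · exact hge
  -- minimal cluster of C' containing A
  have hXF : X ∈ C'.filter (A ⊆ ·) := Finset.mem_filter.mpr ⟨h'.1, hAX⟩
  obtain ⟨A', hA'F, hmin⟩ := Finset.exists_min_image (C'.filter (A ⊆ ·)) Finset.card ⟨X, hXF⟩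
  rw [Finset.mem_filter] at hA'F
  obtain ⟨hA'C', hAA'⟩ := hA'F
  have hminimal : ∀ B ∈ C', A ⊆ B → A' ⊆ B := by
    intro B hB hAB
    rcases h'.2.2.2.1 A' hA'C' B hB with hd | hs | hs
    · obtain ⟨x, hx⟩ := hAne
      exact absurd (Finset.mem_inter.mpr ⟨hAA' hx, hAB hx⟩) (by simp [hd])
    · exact hs
    · have := hmin B (Finset.mem_filter.mpr ⟨hB, hAB⟩)
      exact (Finset.eq_of_subset_of_card_le hs this).ge
  have hAA'ne : A ≠ A' := fun hEq => hAC' (hEq ▸ hA'C')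
  have hAssA' : A ⊂ A' := ssubset_of_ne_of_subset hAA'ne hAA'
  -- split A'
  have hA'2 : 2 ≤ A'.card := le_trans hA2 (Finset.card_le_card hAA')
  obtain ⟨B₁, hB₁, B₂, hB₂, hdisj, hunion, hB₁ne, hB₂ne⟩ := h'.2.2.2.2 A' hA'C' hA'2
  have hB₁sub : B₁ ⊆ A' := hunion ▸ Finset.subset_union_left
  have hB₂sub : B₂ ⊆ A' := hunion ▸ Finset.subset_union_right
  have hnotsub₁ : ¬ A ⊆ B₁ := fun hc =>
    hB₁ne (Finset.Subset.antisymm hB₁sub (hminimal B₁ hB₁ hc))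
  have hnotsub₂ : ¬ A ⊆ B₂ := fun hc =>
    hB₂ne (Finset.Subset.antisymm hB₂sub (hminimal B₂ hB₂ hc))
  obtain ⟨a, haA, haB₁⟩ := Finset.not_subset.mp hnotsub₁
  obtain ⟨b, hbA, hbB₂⟩ := Finset.not_subset.mp hnotsub₂
  have haB₂ : a ∈ B₂ := by
    have := hAA' haA
    rw [← hunion, Finset.mem_union] at this
    tauto
  have hbB₁ : b ∈ B₁ := by
    have := hAA' hbA
    rw [← hunion, Finset.mem_union] at this
    tauto
  obtain ⟨c, hcA', hcA⟩ := Finset.exists_of_ssubset hAssA'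
  refine ⟨{a, b, c}, ?_, ?_, ?_⟩
  · intro x hx
    simp only [Finset.mem_insert, Finset.mem_singleton] at hx
    rcases hx with rfl | rfl | rfl
    · exact hAX haA
    · exact hAX hbA
    · exact (h'.2.2.1 A' hA'C').1 hcA'
  · calc ({a,b,c} : Finset ℕ).card ≤ ({b,c} : Finset ℕ).card + 1 := Finset.card_insert_le _ _
      _ ≤ (({c} : Finset ℕ).card + 1) + 1 := by exact Nat.add_le_add_right (Finset.card_insert_le _ _) 1
      _ ≤ 3 := by simp
  · intro hEq
    have hmem : ({a, b} : Finset ℕ) ∈ restrictR C {a, b, c} := by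
      rw [mem_restrictR_s7]
      refine ⟨⟨A, hAC, ?_⟩, ⟨a, by simp⟩⟩
      ext x
      simp only [Finset.mem_inter, Finset.mem_insert, Finset.mem_singleton]
      constructor
      · rintro ⟨hxA, rfl | rfl | rfl⟩
        · left; rfl
        · right; rfl
        · exact absurd hxA hcA
      · rintro (rfl | rfl)
        · exact ⟨haA, Or.inl rfl⟩
        · exact ⟨hbA, Or.inr (Or.inl rfl)⟩
    rw [hEq, mem_restrictR_s7] at hmem
    obtain ⟨⟨B, hBC', hBab⟩, -⟩ := hmem
    have haB : a ∈ B := by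
      have : a ∈ B ∩ {a, b, c} := hBab ▸ by simp
      exact (Finset.mem_inter.mp this).1
    have hbB : b ∈ B := by
      have : b ∈ B ∩ {a, b, c} := hBab ▸ by simp
      exact (Finset.mem_inter.mp this).1
    have hcB : c ∉ B := by
      intro hc
      have : c ∈ B ∩ {a, b, c} := Finset.mem_inter.mpr ⟨hc, by simp⟩
      rw [hBab] at this
      simp only [Finset.mem_insert, Finset.mem_singleton] at this
      rcases this with rfl | rfl <;> [exact hcA haA; exact hcA hbA]
    have hB₁B : B₁ ⊆ B := by
      rcases h'.2.2.2.1 B hBC' B₁ hB₁ with hd | hs | hs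
      · exact absurd (Finset.mem_inter.mpr ⟨hbB, hbB₁⟩) (by simp [hd])
      · exact absurd haB₂ (Finset.disjoint_left.mp hdisj (hs haB))
      · exact hs
    have hB₂B : B₂ ⊆ B := by
      rcases h'.2.2.2.1 B hBC' B₂ hB₂ with hd | hs | hs
      · exact absurd (Finset.mem_inter.mpr ⟨haB, haB₂⟩) (by simp [hd])
      · exact absurd hbB₁ (Finset.disjoint_right.mp hdisj (hs hbB))
      · exact hs
    exact hcB (hB₁B (by
      have : c ∈ B₁ ∪ B₂ := hunion.symm ▸ hcA'
      rcases Finset.mem_union.mp this with h1 | h1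
      · exact h1
      · exact absurd h1 (fun h1 => (hcB (hB₂B h1)))))

lemma tripleA {X : Finset ℕ} {C C' : Finset (Finset ℕ)}
    (h : IsRBT X C) (h' : IsRBT X C') (hne : C ≠ C') :
    ∃ Y ⊆ X, Y.card ≤ 3 ∧ restrictR C Y ≠ restrictR C' Y := by
  by_cases hsub : ∀ A ∈ C, A ∈ C'
  · have : ∃ A ∈ C', A ∉ C := by
      by_contra hc
      push_neg at hc
      exact hne (Finset.Subset.antisymm hsub hc)
    obtain ⟨A, hA, hA'⟩ := this
    obtain ⟨Y, hYX, hYc, hY⟩ := tripleA_aux h' h hA hA'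
    exact ⟨Y, hYX, hYc, hY.symm⟩
  · push_neg at hsub
    obtain ⟨A, hA, hA'⟩ := hsub
    exact tripleA_aux h h' hA hA'

open Multiset in
/-- Push lemma: if restrictions to `K` agree, the `Y`-classes' restrictions to
`K' ⊆ K` agree. -/
lemma push_lemma {S T : Multiset (Finset (Finset ℕ))} {K K' Y : Finset ℕ}
    (hY : Y ⊆ K) (hK' : K' ⊆ K) (v : Finset (Finset ℕ))
    (h : S.map (fun C => restrictR C K) = T.map (fun C => restrictR C K)) :
    (S.filter (fun C => v = restrictR C Y)).map (fun C => restrictR C K')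
      = (T.filter (fun C => v = restrictR C Y)).map (fun C => restrictR C K') := by
  classical
  have key : ∀ (U : Multiset (Finset (Finset ℕ))),
      (U.filter (fun C => v = restrictR C Y)).map (fun C => restrictR C K)
        = (U.map (fun C => restrictR C K)).filter (fun ρ => v = restrictR ρ Y) := by
    intro U
    rw [Multiset.filter_map]
    congr 1
    apply Multiset.filter_congr
    intro C _
    simp only [Function.comp_apply, restrict_restrict hY]
  have h2 : (S.filter (fun C => v = restrictR C Y)).map (fun C => restrictR C K)
      = (T.filter (fun C => v = restrictR C Y)).map (fun C => restrictR C K) := by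
    rw [key, key, h]
  have h3 := congrArg (Multiset.map (fun ρ => restrictR ρ K')) h2
  rw [Multiset.map_map, Multiset.map_map] at h3
  calc (S.filter (fun C => v = restrictR C Y)).map (fun C => restrictR C K')
      = (S.filter (fun C => v = restrictR C Y)).map
          ((fun ρ => restrictR ρ K') ∘ (fun C => restrictR C K)) := by
        apply Multiset.map_congr rfl
        intro C _
        simp [Function.comp_apply, restrict_restrict hK']
    _ = (T.filter (fun C => v = restrictR C Y)).map
          ((fun ρ => restrictR ρ K') ∘ (fun C => restrictR C K)) := h3
    _ = (T.filter (fun C => v = restrictR C Y)).map (fun C => restrictR C K') := by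
        apply Multiset.map_congr rfl
        intro C _
        simp [Function.comp_apply, restrict_restrict hK']

/-- Upper bound for multisets with disjoint supports. -/
lemma upper_disjoint : ∀ q : ℕ, 1 ≤ q → ∀ (X : Finset ℕ)
    (S T : Multiset (Finset (Finset ℕ))),
    Multiset.card S = q → Multiset.card T = q →
    (∀ C ∈ S, IsRBT X C) → (∀ C ∈ T, IsRBT X C) →
    (∀ C, C ∈ S → C ∈ T → False) → S ≠ T →
    ∃ K ⊆ X, K.card ≤ 3 * (Nat.log 2 q + 1) ∧
      S.map (fun C => restrictR C K) ≠ T.map (fun C => restrictR C K) := by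
  intro q
  induction q using Nat.strong_induction_on with
  | _ q IH =>
  intro hq X S T hScard hTcard hSrbt hTrbt hdisj hne
  classical
  -- pick s ∈ S, t ∈ T
  obtain ⟨s, hs⟩ := Multiset.card_pos_iff_exists_mem.mp (by omega : 0 < Multiset.card S)
  obtain ⟨t, ht⟩ := Multiset.card_pos_iff_exists_mem.mp (by omega : 0 < Multiset.card T)
  have hst : s ≠ t := fun hEq => hdisj s hs (hEq ▸ ht)
  obtain ⟨Y, hYX, hYcard, hYne⟩ := tripleA (hSrbt s hs) (hTrbt t ht) hst
  by_cases hSTY : S.map (fun C => restrictR C Y) = T.map (fun C => restrictR C Y)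
  · -- equal on Y: find a small class
    set W : Multiset (Finset (Finset ℕ)) := S.map (fun C => restrictR C Y) with hW
    have hsW : restrictR s Y ∈ W := Multiset.mem_map_of_mem _ hs
    have htW : restrictR t Y ∈ W := by
      rw [hSTY]; exact Multiset.mem_map_of_mem _ ht
    -- minimal count value
    obtain ⟨v, hvW, hvmin⟩ := Finset.exists_min_image W.toFinset
      (fun v => W.count v) ⟨restrictR s Y, Multiset.mem_toFinset.mpr hsW⟩
    have hvW' : v ∈ W := Multiset.mem_toFinset.mp hvW
    set m := W.count v with hm
    have hm1 : 1 ≤ m := Multiset.one_le_count_iff_mem.mpr hvW'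
    -- two distinct values give 2m ≤ q
    have h2m : 2 * m ≤ q := by
      have hsub : ({restrictR s Y, restrictR t Y} : Finset (Finset (Finset ℕ)))
          ⊆ W.toFinset := by
        intro x hx
        simp only [Finset.mem_insert, Finset.mem_singleton] at hx
        rcases hx with rfl | rfl
        · exact Multiset.mem_toFinset.mpr hsW
        · exact Multiset.mem_toFinset.mpr htW
      have hsum : ∑ x ∈ W.toFinset, W.count x = q := by
        rw [Multiset.toFinset_sum_count_eq, hW, Multiset.card_map, hScard]
      have hpair : ∑ x ∈ ({restrictR s Y, restrictR t Y} :
          Finset (Finset (Finset ℕ))), W.count x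
          = W.count (restrictR s Y) + W.count (restrictR t Y) :=
        Finset.sum_pair hYne
      have hle : ∑ x ∈ ({restrictR s Y, restrictR t Y} :
          Finset (Finset (Finset ℕ))), W.count x ≤ ∑ x ∈ W.toFinset, W.count x :=
        Finset.sum_le_sum_of_subset hsub
      have h1 := hvmin (restrictR s Y) (Multiset.mem_toFinset.mpr hsW)
      have h2 := hvmin (restrictR t Y) (Multiset.mem_toFinset.mpr htW)
      omega
    have hmq : m < q := by omega
    -- the classes
    set Sv := S.filter (fun C => v = restrictR C Y) with hSv
    set Tv := T.filter (fun C => v = restrictR C Y) with hTv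
    have hSvcard : Multiset.card Sv = m := by
      rw [hSv, hm, hW, Multiset.count_map]
    have hTvcard : Multiset.card Tv = m := by
      rw [hTv, hm, hSTY, Multiset.count_map]
    have hSvne : Sv ≠ Tv := by
      intro hEq
      obtain ⟨u, hu⟩ := Multiset.card_pos_iff_exists_mem.mp
        (by omega : 0 < Multiset.card Sv)
      have huS : u ∈ S := Multiset.mem_of_mem_filter hu
      have huT : u ∈ T := Multiset.mem_of_mem_filter (hEq ▸ hu)
      exact hdisj u huS huT
    obtain ⟨K', hK'X, hK'card, hK'dis⟩ := IH m hmq hm1 X Sv Tv hSvcard hTvcard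
      (fun C hC => hSrbt C (Multiset.mem_of_mem_filter hC))
      (fun C hC => hTrbt C (Multiset.mem_of_mem_filter hC))
      (fun C hC hC' => hdisj C (Multiset.mem_of_mem_filter hC)
        (Multiset.mem_of_mem_filter hC')) hSvne
    refine ⟨Y ∪ K', Finset.union_subset hYX hK'X, ?_, ?_⟩
    · -- cardinality bound
      have hq2 : 2 ≤ q := by omega
      have hlog1 : 1 ≤ Nat.log 2 q := Nat.log_pos (by norm_num) hq2
      have hmq2 : m ≤ q / 2 := by omega
      have hlogm : Nat.log 2 m ≤ Nat.log 2 (q / 2) := Nat.log_mono_right hmq2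
      have hlogdiv : Nat.log 2 (q / 2) = Nat.log 2 q - 1 := Nat.log_div_base 2 q
      have := Finset.card_union_le Y K'
      omega
    · intro hEq
      exact hK'dis (push_lemma Finset.subset_union_left Finset.subset_union_right v hEq)
  · exact ⟨Y, hYX, by omega, hSTY⟩

/-- General upper bound. -/
lemma upper_general (r : ℕ) (hr : 0 < r) (X : Finset ℕ)
    (S T : Multiset (Finset (Finset ℕ)))
    (hScard : Multiset.card S = r) (hTcard : Multiset.card T = r)
    (hSrbt : ∀ C ∈ S, IsRBT X C) (hTrbt : ∀ C ∈ T, IsRBT X C) (hne : S ≠ T) :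
    ∃ K ⊆ X, K.card ≤ 3 * (Nat.log 2 r + 1) ∧
      S.map (fun C => restrictR C K) ≠ T.map (fun C => restrictR C K) := by
  classical
  set U := S ∩ T with hU
  set S₀ := S - T with hS₀
  set T₀ := T - S with hT₀
  have hSdecomp : U + S₀ = S := by
    ext a
    simp only [hU, hS₀, Multiset.count_add, Multiset.count_inter, Multiset.count_sub]
    omega
  have hTdecomp : U + T₀ = T := by
    ext a
    simp only [hU, hT₀, Multiset.count_add, Multiset.count_inter, Multiset.count_sub]
    omega
  have hcards : Multiset.card S₀ = Multiset.card T₀ := by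
    have h1 := congrArg Multiset.card hSdecomp
    have h2 := congrArg Multiset.card hTdecomp
    rw [Multiset.card_add] at h1 h2
    omega
  have hS₀ne : S₀ ≠ T₀ := by
    intro hEq
    exact hne (by rw [← hSdecomp, ← hTdecomp, hEq])
  have hq1 : 1 ≤ Multiset.card S₀ := by
    by_contra hc
    have h0 : Multiset.card S₀ = 0 := by omega
    have h0' : Multiset.card T₀ = 0 := by omega
    exact hS₀ne (by rw [Multiset.card_eq_zero.mp h0, Multiset.card_eq_zero.mp h0'])
  have hdisj : ∀ C, C ∈ S₀ → C ∈ T₀ → False := by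
    intro C hCS hCT
    rw [hS₀, ← Multiset.count_pos] at hCS
    rw [hT₀, ← Multiset.count_pos] at hCT
    rw [Multiset.count_sub] at hCS hCT
    omega
  have hS₀S : ∀ C ∈ S₀, C ∈ S := fun C hC =>
    Multiset.mem_of_le (Multiset.sub_le_self _ _) hC
  have hT₀T : ∀ C ∈ T₀, C ∈ T := fun C hC =>
    Multiset.mem_of_le (Multiset.sub_le_self _ _) hC
  obtain ⟨K, hKX, hKcard, hKdis⟩ := upper_disjoint (Multiset.card S₀) hq1 X S₀ T₀
    rfl hcards.symm (fun C hC => hSrbt C (hS₀S C hC)) (fun C hC => hTrbt C (hT₀T C hC))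
    hdisj hS₀ne
  have hqr : Multiset.card S₀ ≤ r := by
    rw [hS₀]
    exact le_trans (Multiset.card_le_card (Multiset.sub_le_self S T)) (le_of_eq hScard)
  refine ⟨K, hKX, ?_, ?_⟩
  · have := Nat.log_mono_right (b := 2) hqr
    omega
  · intro hEq
    apply hKdis
    have : (U + S₀).map (fun C => restrictR C K) = (U + T₀).map (fun C => restrictR C K) := by
      rw [hSdecomp, hTdecomp]; exact hEq
    rw [Multiset.map_add, Multiset.map_add] at this
    exact add_left_cancel this

/-- Block `i` of three leaves. -/
def Bl (i : ℕ) : Finset ℕ := {3*i, 3*i+1, 3*i+2}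

/-- The cherry in block `i`, position depending on `v`. -/
def pat (v : Bool) (i : ℕ) : Finset ℕ := if v then {3*i+1, 3*i+2} else {3*i, 3*i+1}

/-- The caterpillar-of-blocks tree with `m` blocks and cherry pattern `β`. -/
def tr (m : ℕ) (β : ℕ → Bool) : Finset (Finset ℕ) :=
  ((Finset.range (3*m)).image fun x => ({x} : Finset ℕ)) ∪ ((Finset.range m).image Bl)
  ∪ ((Finset.range m).image fun i => pat (β i) i)
  ∪ ((Finset.range m).image fun j => Finset.range (3*(j+1)))

lemma mem_Bl {x i : ℕ} : x ∈ Bl i ↔ (x = 3*i ∨ x = 3*i+1 ∨ x = 3*i+2) := by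
  simp [Bl]

lemma mem_pat_false {x i : ℕ} : x ∈ pat false i ↔ (x = 3*i ∨ x = 3*i+1) := by
  simp [pat]

lemma mem_pat_true {x i : ℕ} : x ∈ pat true i ↔ (x = 3*i+1 ∨ x = 3*i+2) := by
  simp [pat]

lemma mem_pat_mid {v : Bool} {i : ℕ} : 3*i+1 ∈ pat v i := by
  cases v <;> simp [pat]

lemma pat_subset_Bl {v : Bool} {i : ℕ} : pat v i ⊆ Bl i := by
  intro x hx
  cases v <;> simp [pat] at hx <;> rw [mem_Bl] <;> tauto

lemma card_Bl {i : ℕ} : (Bl i).card = 3 := by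
  rw [Bl, Finset.card_insert_of_notMem (by simp), Finset.card_insert_of_notMem (by simp),
    Finset.card_singleton]

lemma card_pat {v : Bool} {i : ℕ} : (pat v i).card = 2 := by
  cases v <;>
  · rw [pat]
    simp only [Bool.false_eq_true, if_false, if_true]
    rw [Finset.card_insert_of_notMem (by simp), Finset.card_singleton]

lemma mem_tr {m : ℕ} {β : ℕ → Bool} {A : Finset ℕ} :
    A ∈ tr m β ↔ (∃ x, x < 3*m ∧ ({x} : Finset ℕ) = A) ∨ (∃ i, i < m ∧ Bl i = A)
      ∨ (∃ i, i < m ∧ pat (β i) i = A) ∨ (∃ j, j < m ∧ Finset.range (3*(j+1)) = A) := by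
  simp [tr, Finset.mem_union, Finset.mem_image, Finset.mem_range, or_assoc]

lemma disj_helper {A B : Finset ℕ} (h : ∀ x, x ∈ A → x ∈ B → False) : A ∩ B = ∅ := by
  rw [Finset.eq_empty_iff_forall_notMem]
  intro x hx
  rw [Finset.mem_inter] at hx
  exact h x hx.1 hx.2

lemma Bl_disj {i j : ℕ} (h : i ≠ j) : Bl i ∩ Bl j = ∅ := by
  apply disj_helper
  intro x hx hy
  rw [mem_Bl] at hx hy
  omega

lemma Bl_subset_range {i j : ℕ} (h : i ≤ j) : Bl i ⊆ Finset.range (3*(j+1)) := by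
  intro x hx
  rw [mem_Bl] at hx
  rw [Finset.mem_range]
  omega

lemma Bl_disj_range {i j : ℕ} (h : j < i) : Bl i ∩ Finset.range (3*(j+1)) = ∅ := by
  apply disj_helper
  intro x hx hy
  rw [mem_Bl] at hx
  rw [Finset.mem_range] at hy
  omega

lemma lam_singleton (x : ℕ) (B : Finset ℕ) :
    ({x} : Finset ℕ) ∩ B = ∅ ∨ ({x} : Finset ℕ) ⊆ B ∨ B ⊆ ({x} : Finset ℕ) := by
  by_cases h : x ∈ B
  · exact Or.inr (Or.inl (Finset.singleton_subset_iff.mpr h))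
  · exact Or.inl (disj_helper fun y hy hy' => h ((Finset.mem_singleton.mp hy) ▸ hy'))

lemma lam_comm {A B : Finset ℕ} (h : A ∩ B = ∅ ∨ A ⊆ B ∨ B ⊆ A) :
    B ∩ A = ∅ ∨ B ⊆ A ∨ A ⊆ B := by
  rw [Finset.inter_comm]
  tauto

lemma inter_empty_sub_right {A B B' : Finset ℕ} (hs : B' ⊆ B) (h : A ∩ B = ∅) :
    A ∩ B' = ∅ := by
  apply disj_helper
  intro x hx hy
  have : x ∈ A ∩ B := Finset.mem_inter.mpr ⟨hx, hs hy⟩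
  simp [h] at this

lemma isRBT_tr (m : ℕ) (hm : 1 ≤ m) (β : ℕ → Bool) :
    IsRBT (Finset.range (3*m)) (tr m β) := by
  refine ⟨?_, ?_, ?_, ?_, ?_⟩
  · rw [mem_tr]
    exact Or.inr (Or.inr (Or.inr ⟨m-1, by omega, by congr 1; omega⟩))
  · intro x hx
    rw [Finset.mem_range] at hx
    rw [mem_tr]
    exact Or.inl ⟨x, hx, rfl⟩
  · intro A hA
    rw [mem_tr] at hA
    rcases hA with ⟨x, hx, rfl⟩ | ⟨i, hi, rfl⟩ | ⟨i, hi, rfl⟩ | ⟨j, hj, rfl⟩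
    · exact ⟨Finset.singleton_subset_iff.mpr (Finset.mem_range.mpr hx), ⟨x, by simp⟩⟩
    · refine ⟨fun x hx => ?_, ⟨3*i, by rw [mem_Bl]; tauto⟩⟩
      rw [mem_Bl] at hx
      rw [Finset.mem_range]
      omega
    · refine ⟨fun x hx => ?_, ⟨3*i+1, mem_pat_mid⟩⟩
      have := pat_subset_Bl hx
      rw [mem_Bl] at this
      rw [Finset.mem_range]
      omega
    · exact ⟨Finset.range_subset_range.mpr (by omega), ⟨0, Finset.mem_range.mpr (by omega)⟩⟩
  · intro A hA B hB
    rw [mem_tr] at hA hB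
    rcases hA with ⟨x, hx, rfl⟩ | ⟨i, hi, rfl⟩ | ⟨i, hi, rfl⟩ | ⟨i, hi, rfl⟩
    · exact lam_singleton x B
    · rcases hB with ⟨y, hy, rfl⟩ | ⟨j, hj, rfl⟩ | ⟨j, hj, rfl⟩ | ⟨j, hj, rfl⟩
      · exact lam_comm (lam_singleton y _)
      · rcases eq_or_ne i j with rfl | hij
        · exact Or.inr (Or.inl Finset.Subset.rfl)
        · exact Or.inl (Bl_disj hij)
      · rcases eq_or_ne i j with rfl | hij
        · exact Or.inr (Or.inr pat_subset_Bl)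
        · exact Or.inl (inter_empty_sub_right pat_subset_Bl (Bl_disj hij))
      · rcases le_or_gt i j with hle | hlt
        · exact Or.inr (Or.inl (Bl_subset_range hle))
        · exact Or.inl (Bl_disj_range hlt)
    · rcases hB with ⟨y, hy, rfl⟩ | ⟨j, hj, rfl⟩ | ⟨j, hj, rfl⟩ | ⟨j, hj, rfl⟩
      · exact lam_comm (lam_singleton y _)
      · rcases eq_or_ne i j with rfl | hij
        · exact Or.inr (Or.inl pat_subset_Bl)
        · exact Or.inl (inter_empty_sub_right (Finset.Subset.rfl) (by
            rw [Finset.inter_comm]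
            exact inter_empty_sub_right pat_subset_Bl (Bl_disj hij.symm)))
      · rcases eq_or_ne i j with rfl | hij
        · exact Or.inr (Or.inl Finset.Subset.rfl)
        · refine Or.inl (inter_empty_sub_right pat_subset_Bl ?_)
          rw [Finset.inter_comm]
          exact inter_empty_sub_right pat_subset_Bl (Bl_disj hij.symm)
      · rcases le_or_gt i j with hle | hlt
        · exact Or.inr (Or.inl (pat_subset_Bl.trans (Bl_subset_range hle)))
        · refine Or.inl ?_
          rw [Finset.inter_comm]
          exact inter_empty_sub_right pat_subset_Bl
            (by rw [Finset.inter_comm]; exact Bl_disj_range hlt)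
    · rcases hB with ⟨y, hy, rfl⟩ | ⟨j, hj, rfl⟩ | ⟨j, hj, rfl⟩ | ⟨j, hj, rfl⟩
      · exact lam_comm (lam_singleton y _)
      · rcases le_or_gt j i with hle | hlt
        · exact Or.inr (Or.inr (Bl_subset_range hle))
        · exact Or.inl (by rw [Finset.inter_comm]; exact Bl_disj_range hlt)
      · rcases le_or_gt j i with hle | hlt
        · exact Or.inr (Or.inr (pat_subset_Bl.trans (Bl_subset_range hle)))
        · exact Or.inl (inter_empty_sub_right pat_subset_Bl (by
            rw [Finset.inter_comm]; exact Bl_disj_range hlt))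
      · rcases le_or_gt i j with hle | hlt
        · exact Or.inr (Or.inl (Finset.range_subset_range.mpr (by omega)))
        · exact Or.inr (Or.inr (Finset.range_subset_range.mpr (by omega)))
  · intro A hA hA2
    rw [mem_tr] at hA
    rcases hA with ⟨x, hx, rfl⟩ | ⟨i, hi, rfl⟩ | ⟨i, hi, rfl⟩ | ⟨j, hj, rfl⟩
    · simp at hA2
    · -- block splits into cherry and leftover singleton
      cases hv : β i
      · refine ⟨pat false i, by rw [mem_tr]; exact Or.inr (Or.inr (Or.inl ⟨i, hi, by rw [hv]⟩)),
          {3*i+2}, by rw [mem_tr]; exact Or.inl ⟨3*i+2, by omega, rfl⟩, ?_, ?_, ?_, ?_⟩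
        · rw [Finset.disjoint_left]
          intro x hx hy
          rw [mem_pat_false] at hx
          rw [Finset.mem_singleton] at hy
          omega
        · ext x
          rw [Finset.mem_union, mem_pat_false, Finset.mem_singleton, mem_Bl]
          omega
        · intro h
          have := congrArg Finset.card h
          rw [card_pat, card_Bl] at this
          omega
        · intro h
          have := congrArg Finset.card h
          rw [Finset.card_singleton, card_Bl] at this
          omega
      · refine ⟨pat true i, by rw [mem_tr]; exact Or.inr (Or.inr (Or.inl ⟨i, hi, by rw [hv]⟩)),
          {3*i}, by rw [mem_tr]; exact Or.inl ⟨3*i, by omega, rfl⟩, ?_, ?_, ?_, ?_⟩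
        · rw [Finset.disjoint_left]
          intro x hx hy
          rw [mem_pat_true] at hx
          rw [Finset.mem_singleton] at hy
          omega
        · ext x
          rw [Finset.mem_union, mem_pat_true, Finset.mem_singleton, mem_Bl]
          omega
        · intro h
          have := congrArg Finset.card h
          rw [card_pat, card_Bl] at this
          omega
        · intro h
          have := congrArg Finset.card h
          rw [Finset.card_singleton, card_Bl] at this
          omega
    · -- cherry splits into two singletons
      cases hv : β i
      · refine ⟨{3*i}, by rw [mem_tr]; exact Or.inl ⟨3*i, by omega, rfl⟩,
          {3*i+1}, by rw [mem_tr]; exact Or.inl ⟨3*i+1, by omega, rfl⟩, ?_, ?_, ?_, ?_⟩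
        · rw [Finset.disjoint_left]
          intro x hx hy
          rw [Finset.mem_singleton] at hx hy
          omega
        · ext x
          rw [Finset.mem_union, Finset.mem_singleton, Finset.mem_singleton, mem_pat_false]
        · intro h
          have := congrArg Finset.card h
          rw [Finset.card_singleton, card_pat] at this
          omega
        · intro h
          have := congrArg Finset.card h
          rw [Finset.card_singleton, card_pat] at this
          omega
      · refine ⟨{3*i+1}, by rw [mem_tr]; exact Or.inl ⟨3*i+1, by omega, rfl⟩,
          {3*i+2}, by rw [mem_tr]; exact Or.inl ⟨3*i+2, by omega, rfl⟩, ?_, ?_, ?_, ?_⟩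
        · rw [Finset.disjoint_left]
          intro x hx hy
          rw [Finset.mem_singleton] at hx hy
          omega
        · ext x
          rw [Finset.mem_union, Finset.mem_singleton, Finset.mem_singleton, mem_pat_true]
        · intro h
          have := congrArg Finset.card h
          rw [Finset.card_singleton, card_pat] at this
          omega
        · intro h
          have := congrArg Finset.card h
          rw [Finset.card_singleton, card_pat] at this
          omega
    · -- spine set splits
      rcases Nat.eq_zero_or_pos j with rfl | hj1
      · -- range 3 = Bl 0
        cases hv : β 0
        · refine ⟨pat false 0, by rw [mem_tr]; exact Or.inr (Or.inr (Or.inl ⟨0, by omega, by rw [hv]⟩)),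
            {2}, by rw [mem_tr]; exact Or.inl ⟨2, by omega, rfl⟩, ?_, ?_, ?_, ?_⟩
          · rw [Finset.disjoint_left]
            intro x hx hy
            rw [mem_pat_false] at hx
            rw [Finset.mem_singleton] at hy
            omega
          · ext x
            rw [Finset.mem_union, mem_pat_false, Finset.mem_singleton, Finset.mem_range]
            omega
          · intro h
            have := congrArg Finset.card h
            rw [card_pat, Finset.card_range] at this
            omega
          · intro h
            have := congrArg Finset.card h
            rw [Finset.card_singleton, Finset.card_range] at this
            omega
        · refine ⟨pat true 0, by rw [mem_tr]; exact Or.inr (Or.inr (Or.inl ⟨0, by omega, by rw [hv]⟩)),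
            {0}, by rw [mem_tr]; exact Or.inl ⟨0, by omega, rfl⟩, ?_, ?_, ?_, ?_⟩
          · rw [Finset.disjoint_left]
            intro x hx hy
            rw [mem_pat_true] at hx
            rw [Finset.mem_singleton] at hy
            omega
          · ext x
            rw [Finset.mem_union, mem_pat_true, Finset.mem_singleton, Finset.mem_range]
            omega
          · intro h
            have := congrArg Finset.card h
            rw [card_pat, Finset.card_range] at this
            omega
          · intro h
            have := congrArg Finset.card h
            rw [Finset.card_singleton, Finset.card_range] at this
            omega
      · have hmem1 : Finset.range (3*j) ∈ tr m β := by
          rw [mem_tr]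
          exact Or.inr (Or.inr (Or.inr ⟨j-1, by omega, by congr 1; omega⟩))
        have hmem2 : Bl j ∈ tr m β := by
          rw [mem_tr]
          exact Or.inr (Or.inl ⟨j, hj, rfl⟩)
        refine ⟨Finset.range (3*j), hmem1, Bl j, hmem2, ?_, ?_, ?_, ?_⟩
        · rw [Finset.disjoint_left]
          intro x hx hy
          rw [Finset.mem_range] at hx
          rw [mem_Bl] at hy
          omega
        · ext x
          rw [Finset.mem_union, Finset.mem_range, mem_Bl, Finset.mem_range]
          omega
        · intro h
          have := congrArg Finset.card h
          rw [Finset.card_range, Finset.card_range] at this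
          omega
        · intro h
          have := congrArg Finset.card h
          rw [card_Bl, Finset.card_range] at this
          omega

/-- The pattern function is recoverable from the tree. -/
lemma tr_inj {m : ℕ} {β β' : ℕ → Bool} (h : tr m β = tr m β') {i : ℕ} (hi : i < m) :
    β i = β' i := by
  have hmem : pat (β i) i ∈ tr m β' := by
    rw [← h, mem_tr]
    exact Or.inr (Or.inr (Or.inl ⟨i, hi, rfl⟩))
  rw [mem_tr] at hmem
  rcases hmem with ⟨x, hx, hEq⟩ | ⟨j, hj, hEq⟩ | ⟨j, hj, hEq⟩ | ⟨j, hj, hEq⟩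
  · have := congrArg Finset.card hEq
    rw [Finset.card_singleton, card_pat] at this
    omega
  · have := congrArg Finset.card hEq
    rw [card_Bl, card_pat] at this
    omega
  · have hij : i = j := by
      have h1 : 3*i+1 ∈ pat (β' j) j := hEq ▸ mem_pat_mid
      have := pat_subset_Bl h1
      rw [mem_Bl] at this
      omega
    subst hij
    cases hb : β i <;> cases hb' : β' i
    · rfl
    · rw [hb, hb'] at hEq
      have : (3*i : ℕ) ∈ pat true i := hEq ▸ (mem_pat_false.mpr (Or.inl rfl))
      rw [mem_pat_true] at this
      omega
    · rw [hb, hb'] at hEq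
      have : (3*i : ℕ) ∈ pat true i := hEq.symm ▸ (mem_pat_false.mpr (Or.inl rfl))
      rw [mem_pat_true] at this
      omega
    · rfl
  · have := congrArg Finset.card hEq
    rw [Finset.card_range, card_pat] at this
    omega

lemma not_all_three {K : Finset ℕ} {i : ℕ} (hK : (K ∩ Bl i).card ≤ 2)
    (ha : 3*i ∈ K) (hb : 3*i+1 ∈ K) (hc : 3*i+2 ∈ K) : False := by
  have hsub : Bl i ⊆ K ∩ Bl i := by
    intro x hx
    have hx' := hx
    rw [mem_Bl] at hx'
    refine Finset.mem_inter.mpr ⟨?_, hx⟩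
    rcases hx' with rfl | rfl | rfl <;> assumption
  have := Finset.card_le_card hsub
  rw [card_Bl] at this
  omega

/-- Provide a pattern-free witness for the intersection of a cherry with a
small transversal. -/
lemma pat_inter_witness {m i : ℕ} (hi : i < m) (β' : ℕ → Bool) (v : Bool)
    {K : Finset ℕ} (hK : (K ∩ Bl i).card ≤ 2) (hne : (pat v i ∩ K).Nonempty) :
    ∃ A' ∈ tr m β', A' ∩ K = pat v i ∩ K := by
  classical
  by_cases ha : 3*i ∈ K <;> by_cases hb : 3*i+1 ∈ K <;> by_cases hc : 3*i+2 ∈ K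
  · exact absurd ha (fun _ => not_all_three hK ha hb hc)
  all_goals cases v
  -- now 14 cases; handle uniformly below
  all_goals first
  | -- cherry ∩ K is empty: contradiction with hne
    (exfalso
     obtain ⟨x, hx⟩ := hne
     rw [Finset.mem_inter] at hx
     first
      | (rw [mem_pat_false] at hx; rcases hx.1 with rfl | rfl <;> tauto)
      | (rw [mem_pat_true] at hx; rcases hx.1 with rfl | rfl <;> tauto))
  | -- cherry ∩ K = Bl i ∩ K (the missing leaf is outside K)
    (refine ⟨Bl i, mem_tr.mpr (Or.inr (Or.inl ⟨i, hi, rfl⟩)), ?_⟩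
     ext x
     simp only [Finset.mem_inter, mem_Bl, mem_pat_false, mem_pat_true]
     constructor
     · rintro ⟨(rfl | rfl | rfl), h2⟩ <;> first | exact ⟨by omega, h2⟩ | tauto
     · rintro ⟨(rfl | rfl), h2⟩ <;> exact ⟨by omega, h2⟩)
  | -- cherry ∩ K = {3*i} ∩ K
    (refine ⟨{3*i}, mem_tr.mpr (Or.inl ⟨3*i, by omega, rfl⟩), ?_⟩
     ext x
     simp only [Finset.mem_inter, Finset.mem_singleton, mem_pat_false, mem_pat_true]
     constructor
     · rintro ⟨rfl, h2⟩
       exact ⟨by omega, h2⟩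
     · rintro ⟨(rfl | rfl), h2⟩ <;> first | exact ⟨rfl, h2⟩ | tauto)
  | -- cherry ∩ K = {3*i+1} ∩ K
    (refine ⟨{3*i+1}, mem_tr.mpr (Or.inl ⟨3*i+1, by omega, rfl⟩), ?_⟩
     ext x
     simp only [Finset.mem_inter, Finset.mem_singleton, mem_pat_false, mem_pat_true]
     constructor
     · rintro ⟨rfl, h2⟩
       exact ⟨by omega, h2⟩
     · rintro ⟨(rfl | rfl), h2⟩ <;> first | exact ⟨rfl, h2⟩ | tauto)
  | -- cherry ∩ K = {3*i+2} ∩ K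
    (refine ⟨{3*i+2}, mem_tr.mpr (Or.inl ⟨3*i+2, by omega, rfl⟩), ?_⟩
     ext x
     simp only [Finset.mem_inter, Finset.mem_singleton, mem_pat_false, mem_pat_true]
     constructor
     · rintro ⟨rfl, h2⟩
       exact ⟨by omega, h2⟩
     · rintro ⟨(rfl | rfl), h2⟩ <;> first | exact ⟨rfl, h2⟩ | tauto)

/-- Restrictions to `K` agree for trees whose patterns differ only in a block
meeting `K` in at most two leaves. -/
lemma restrict_invar {m i : ℕ} (hi : i < m) {β β' : ℕ → Bool}
    (hag : ∀ j, j ≠ i → β j = β' j) {K : Finset ℕ} (hK : (K ∩ Bl i).card ≤ 2) :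
    restrictR (tr m β) K = restrictR (tr m β') K := by
  have key : ∀ (γ γ' : ℕ → Bool), (∀ j, j ≠ i → γ j = γ' j) →
      restrictR (tr m γ) K ⊆ restrictR (tr m γ') K := by
    intro γ γ' hg E hE
    rw [mem_restrictR_s7] at hE ⊢
    obtain ⟨⟨A, hA, rfl⟩, hne⟩ := hE
    refine ⟨?_, hne⟩
    rw [mem_tr] at hA
    rcases hA with ⟨x, hx, rfl⟩ | ⟨j, hj, rfl⟩ | ⟨j, hj, rfl⟩ | ⟨j, hj, rfl⟩
    · exact ⟨{x}, mem_tr.mpr (Or.inl ⟨x, hx, rfl⟩), rfl⟩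
    · exact ⟨Bl j, mem_tr.mpr (Or.inr (Or.inl ⟨j, hj, rfl⟩)), rfl⟩
    · rcases eq_or_ne j i with rfl | hji
      · exact pat_inter_witness hj γ' (γ j) hK hne
      · rw [hg j hji]
        exact ⟨pat (γ' j) j, mem_tr.mpr (Or.inr (Or.inr (Or.inl ⟨j, hj, rfl⟩))), rfl⟩
    · exact ⟨Finset.range (3*(j+1)), mem_tr.mpr (Or.inr (Or.inr (Or.inr ⟨j, hj, rfl⟩))), rfl⟩
  exact Finset.Subset.antisymm (key β β' hag) (key β' β (fun j hj => (hag j hj).symm))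

noncomputable section
open Classical

/-- parity of a finite set -/
def par (c : Finset ℕ) : Bool := decide (c.card % 2 = 1)

/-- pattern vector: coordinates `< k` from `c`, coordinate `k` is `last` -/
def βof (k : ℕ) (c : Finset ℕ) (last : Bool) : ℕ → Bool :=
  fun j => if j = k then last else decide (j ∈ c)

def treeS (k : ℕ) (c : Finset ℕ) : Finset (Finset ℕ) := tr (k+1) (βof k c (par c))
def treeT (k : ℕ) (c : Finset ℕ) : Finset (Finset ℕ) := tr (k+1) (βof k c (!par c))

def Sm (k : ℕ) : Multiset (Finset (Finset ℕ)) := ((Finset.range k).powerset.val.map (treeS k))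
def Tm (k : ℕ) : Multiset (Finset (Finset ℕ)) := ((Finset.range k).powerset.val.map (treeT k))

lemma card_Sm (k : ℕ) : Multiset.card (Sm k) = 2^k := by
  rw [Sm, Multiset.card_map]
  have : Multiset.card (Finset.range k).powerset.val = (Finset.range k).powerset.card := rfl
  rw [this, Finset.card_powerset, Finset.card_range]

lemma card_Tm (k : ℕ) : Multiset.card (Tm k) = 2^k := by
  rw [Tm, Multiset.card_map]
  have : Multiset.card (Finset.range k).powerset.val = (Finset.range k).powerset.card := rfl
  rw [this, Finset.card_powerset, Finset.card_range]

lemma Sm_rbt (k : ℕ) : ∀ C ∈ Sm k, IsRBT (Finset.range (3*(k+1))) C := by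
  intro C hC
  rw [Sm, Multiset.mem_map] at hC
  obtain ⟨c, -, rfl⟩ := hC
  exact isRBT_tr (k+1) (by omega) _

lemma Tm_rbt (k : ℕ) : ∀ C ∈ Tm k, IsRBT (Finset.range (3*(k+1))) C := by
  intro C hC
  rw [Tm, Multiset.mem_map] at hC
  obtain ⟨c, -, rfl⟩ := hC
  exact isRBT_tr (k+1) (by omega) _

lemma Sm_ne_Tm (k : ℕ) : Sm k ≠ Tm k := by
  intro hEq
  have hmem : treeS k ∅ ∈ Sm k := by
    rw [Sm]
    exact Multiset.mem_map_of_mem _ (by simp [Finset.mem_powerset])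
  rw [hEq, Tm, Multiset.mem_map] at hmem
  obtain ⟨c, hc, hEqc⟩ := hmem
  rw [Finset.mem_val, Finset.mem_powerset] at hc
  -- coordinate k: !par c = par ∅ = false
  have hk := tr_inj (m := k+1) (β := βof k c (!par c)) (β' := βof k ∅ (par ∅))
    (by rw [treeT] at hEqc; rw [hEqc, treeS]) (Nat.lt_succ_self k)
  rw [βof, βof] at hk
  simp only [if_pos rfl] at hk
  have hpar0 : par ∅ = false := by simp [par]
  rw [hpar0] at hk
  -- coordinates < k: c = ∅
  have hcempty : c = ∅ := by
    rw [Finset.eq_empty_iff_forall_notMem]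
    intro x hx
    have hxk : x < k := Finset.mem_range.mp (hc hx)
    have := tr_inj (m := k+1) (β := βof k c (!par c)) (β' := βof k ∅ (par ∅))
      (by rw [treeT] at hEqc; rw [hEqc, treeS]) (by omega : x < k+1)
    rw [βof, βof] at this
    simp only [if_neg (by omega : ¬ x = k)] at this
    simp [hx] at this
  rw [hcempty, hpar0] at hk
  simp at hk

/-- flip at coordinate `i` -/
def σf (i : ℕ) (c : Finset ℕ) : Finset ℕ := if i ∈ c then c.erase i else insert i c

lemma σf_invol (i : ℕ) (c : Finset ℕ) : σf i (σf i c) = c := by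
  rw [σf, σf]
  by_cases h : i ∈ c
  · rw [if_pos h, if_neg (Finset.notMem_erase i c), Finset.insert_erase h]
  · rw [if_neg h, if_pos (Finset.mem_insert_self i c), Finset.erase_insert h]

lemma σf_mem_powerset {k i : ℕ} (hik : i < k) {c : Finset ℕ}
    (hc : c ∈ (Finset.range k).powerset) : σf i c ∈ (Finset.range k).powerset := by
  rw [Finset.mem_powerset] at hc ⊢
  rw [σf]
  by_cases h : i ∈ c
  · rw [if_pos h]
    exact (Finset.erase_subset _ _).trans hc
  · rw [if_neg h]
    exact Finset.insert_subset (Finset.mem_range.mpr hik) hc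

lemma par_σf {i : ℕ} (c : Finset ℕ) : par (σf i c) = !par c := by
  rw [σf, par, par]
  by_cases h : i ∈ c
  · rw [if_pos h, Finset.card_erase_of_mem h]
    have h1 : 1 ≤ c.card := Finset.card_pos.mpr ⟨i, h⟩
    rcases Nat.even_or_odd c.card with he | ho
    · have h2 : c.card % 2 = 0 := Nat.even_iff.mp he
      have h3 : (c.card - 1) % 2 = 1 := by omega
      simp [h2, h3]
    · have h2 : c.card % 2 = 1 := Nat.odd_iff.mp ho
      have h3 : (c.card - 1) % 2 = 0 := by omega
      simp [h2, h3]
  · rw [if_neg h, Finset.card_insert_of_notMem h]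
    rcases Nat.even_or_odd c.card with he | ho
    · have h2 : c.card % 2 = 0 := Nat.even_iff.mp he
      have h3 : (c.card + 1) % 2 = 1 := by omega
      simp [h2, h3]
    · have h2 : c.card % 2 = 1 := Nat.odd_iff.mp ho
      have h3 : (c.card + 1) % 2 = 0 := by omega
      simp [h2, h3]

lemma mem_σf {i j : ℕ} (hji : j ≠ i) (c : Finset ℕ) : (j ∈ σf i c) = (j ∈ c) := by
  rw [σf]
  by_cases h : i ∈ c
  · rw [if_pos h]
    simp [Finset.mem_erase, hji]
  · rw [if_neg h]
    simp [Finset.mem_insert, hji]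

lemma powerset_map_σf {k i : ℕ} (hik : i < k) :
    (Finset.range k).powerset.val.map (σf i) = (Finset.range k).powerset.val := by
  have hinj : Function.Injective (σf i) := by
    intro a b hab
    rw [← σf_invol i a, hab, σf_invol]
  apply Multiset.Nodup.ext ((Finset.powerset _).nodup.map hinj) (Finset.powerset _).nodup |>.mpr
  intro c
  rw [Multiset.mem_map]
  constructor
  · rintro ⟨d, hd, rfl⟩
    exact σf_mem_powerset hik hd
  · intro hc
    exact ⟨σf i c, σf_mem_powerset hik hc, σf_invol i c⟩

/-- Key: if `K` meets some block in at most 2 leaves, restrictions of `Sm` and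
`Tm` agree. -/
lemma Sm_Tm_restrict_eq (k : ℕ) {K : Finset ℕ} {i : ℕ} (hik : i < k+1)
    (hK : (K ∩ Bl i).card ≤ 2) :
    (Sm k).map (fun C => restrictR C K) = (Tm k).map (fun C => restrictR C K) := by
  rcases eq_or_ne i k with rfl | hlt
  · -- flip the last coordinate
    rw [Sm, Tm, Multiset.map_map, Multiset.map_map]
    apply Multiset.map_congr rfl
    intro c _
    simp only [Function.comp_apply, treeS, treeT]
    exact restrict_invar (Nat.lt_succ_self i) (fun j hj => by
      rw [βof, βof, if_neg hj, if_neg hj]) hK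
  · have hik' : i < k := by omega
    rw [Sm, Tm, Multiset.map_map, Multiset.map_map]
    have hptwise : ∀ c, ((fun C => restrictR C K) ∘ treeS k) c
        = (((fun C => restrictR C K) ∘ treeT k) ∘ (σf i)) c := by
      intro c
      simp only [Function.comp_apply, treeS, treeT]
      have hpar : (!par (σf i c)) = par c := by rw [par_σf, Bool.not_not]
      rw [← hpar]
      apply restrict_invar hik (fun j hj => ?_) hK
      rw [βof, βof]
      by_cases hjk : j = k
      · subst hjk
        rw [if_pos rfl, if_pos rfl, hpar]
      · rw [if_neg hjk, if_neg hjk]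
        have := mem_σf hj c
        simp [this]
    calc (Finset.range k).powerset.val.map ((fun C => restrictR C K) ∘ treeS k)
        = (Finset.range k).powerset.val.map
            (((fun C => restrictR C K) ∘ treeT k) ∘ (σf i)) :=
          Multiset.map_congr rfl (fun c _ => hptwise c)
      _ = ((Finset.range k).powerset.val.map (σf i)).map
            ((fun C => restrictR C K) ∘ treeT k) := by rw [Multiset.map_map]
      _ = (Finset.range k).powerset.val.map ((fun C => restrictR C K) ∘ treeT k) := by
          rw [powerset_map_σf hik']



/-- the padded multisets -/
def Sfull (r : ℕ) : Multiset (Finset (Finset ℕ)) :=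
  Sm (Nat.log 2 r) + Multiset.replicate (r - 2^(Nat.log 2 r))
    (tr (Nat.log 2 r + 1) (fun _ => false))
def Tfull (r : ℕ) : Multiset (Finset (Finset ℕ)) :=
  Tm (Nat.log 2 r) + Multiset.replicate (r - 2^(Nat.log 2 r))
    (tr (Nat.log 2 r + 1) (fun _ => false))

lemma pow_log_le (r : ℕ) (hr : 0 < r) : 2^(Nat.log 2 r) ≤ r :=
  Nat.pow_log_le_self 2 (by omega)

lemma card_Sfull (r : ℕ) (hr : 0 < r) : Multiset.card (Sfull r) = r := by
  rw [Sfull, Multiset.card_add, card_Sm, Multiset.card_replicate]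
  have := pow_log_le r hr
  omega

lemma card_Tfull (r : ℕ) (hr : 0 < r) : Multiset.card (Tfull r) = r := by
  rw [Tfull, Multiset.card_add, card_Tm, Multiset.card_replicate]
  have := pow_log_le r hr
  omega

lemma Sfull_rbt (r : ℕ) :
    ∀ C ∈ Sfull r, IsRBT (Finset.range (3*(Nat.log 2 r + 1))) C := by
  intro C hC
  rw [Sfull, Multiset.mem_add] at hC
  rcases hC with hC | hC
  · exact Sm_rbt _ C hC
  · rw [Multiset.eq_of_mem_replicate hC]
    exact isRBT_tr _ (by omega) _

lemma Tfull_rbt (r : ℕ) :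
    ∀ C ∈ Tfull r, IsRBT (Finset.range (3*(Nat.log 2 r + 1))) C := by
  intro C hC
  rw [Tfull, Multiset.mem_add] at hC
  rcases hC with hC | hC
  · exact Tm_rbt _ C hC
  · rw [Multiset.eq_of_mem_replicate hC]
    exact isRBT_tr _ (by omega) _

lemma Sfull_ne_Tfull (r : ℕ) : Sfull r ≠ Tfull r := by
  intro h
  exact Sm_ne_Tm _ (add_right_cancel h)

/-- a small set misses two leaves of some block -/
lemma exists_small_block {k : ℕ} {K : Finset ℕ}
    (hKX : K ⊆ Finset.range (3*(k+1))) (hcard : K.card < 3*(k+1)) :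
    ∃ i, i < k+1 ∧ (K ∩ Bl i).card ≤ 2 := by
  by_contra hc
  push_neg at hc
  have hBl : ∀ i, i < k+1 → Bl i ⊆ K := by
    intro i hi
    have h3 := hc i hi
    have hsub : K ∩ Bl i ⊆ Bl i := Finset.inter_subset_right
    have hle : (K ∩ Bl i).card ≤ 3 := card_Bl ▸ Finset.card_le_card hsub
    have heq : K ∩ Bl i = Bl i :=
      Finset.eq_of_subset_of_card_le hsub (by rw [card_Bl]; omega)
    intro x hx
    have : x ∈ K ∩ Bl i := heq.symm ▸ hx
    exact (Finset.mem_inter.mp this).1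
  have hrange : Finset.range (3*(k+1)) ⊆ K := by
    intro x hx
    rw [Finset.mem_range] at hx
    have hxi : x ∈ Bl (x/3) := by
      rw [mem_Bl]
      omega
    exact hBl (x/3) (by omega) hxi
  have := Finset.card_le_card hrange
  rw [Finset.card_range] at this
  omega

lemma small_K_eq (r : ℕ) {K : Finset ℕ}
    (hKX : K ⊆ Finset.range (3*(Nat.log 2 r + 1)))
    (hcard : K.card < 3*(Nat.log 2 r + 1)) :
    (Sfull r).map (fun C => restrictR C K) = (Tfull r).map (fun C => restrictR C K) := by
  obtain ⟨i, hik, hKi⟩ := exists_small_block hKX hcard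
  rw [Sfull, Tfull, Multiset.map_add, Multiset.map_add,
    Sm_Tm_restrict_eq (Nat.log 2 r) hik hKi]

lemma full_K_dis (r : ℕ) :
    RDisentangles (Sfull r) (Tfull r) (Finset.range (3*(Nat.log 2 r + 1))) := by
  rw [RDisentangles]
  have h1 : (Sfull r).map (fun C => restrictR C (Finset.range (3*(Nat.log 2 r + 1))))
      = Sfull r := by
    rw [show (Sfull r).map (fun C => restrictR C (Finset.range (3*(Nat.log 2 r + 1))))
        = (Sfull r).map id from Multiset.map_congr rfl
          (fun C hC => restrict_full ((Sfull_rbt r C hC).2.2.1)), Multiset.map_id]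
  have h2 : (Tfull r).map (fun C => restrictR C (Finset.range (3*(Nat.log 2 r + 1))))
      = Tfull r := by
    rw [show (Tfull r).map (fun C => restrictR C (Finset.range (3*(Nat.log 2 r + 1))))
        = (Tfull r).map id from Multiset.map_congr rfl
          (fun C hC => restrict_full ((Tfull_rbt r C hC).2.2.1)), Multiset.map_id]
  rw [h1, h2]
  exact Sfull_ne_Tfull r

lemma dist_eq (r : ℕ) (hr : 0 < r) :
    rootedDisentDist (Finset.range (3*(Nat.log 2 r + 1))) (Sfull r) (Tfull r)
      = 3*(Nat.log 2 r + 1) := by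
  rw [rootedDisentDist]
  have hmem : 3*(Nat.log 2 r + 1) ∈ {m | ∃ K ⊆ Finset.range (3*(Nat.log 2 r + 1)),
      K.card = m ∧ RDisentangles (Sfull r) (Tfull r) K} :=
    ⟨Finset.range (3*(Nat.log 2 r + 1)), Finset.Subset.rfl, Finset.card_range _,
      full_K_dis r⟩
  apply le_antisymm
  · exact Nat.sInf_le hmem
  · apply le_csInf ⟨_, hmem⟩
    rintro m ⟨K, hKX, rfl, hdis⟩
    by_contra hlt
    push_neg at hlt
    exact hdis (small_K_eq r hKX hlt)

end

/-- `RD(r) = 3(⌊log₂ r⌋ + 1)`; in particular, any two distinct `r`-multisets of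
rooted binary leaf-labelled trees on a common leaf set `X` are disentangled by
some `K ⊆ X` with `|K| ≤ 3(⌊log₂ r⌋ + 1)`. -/
theorem rooted_disentangling_number (r : ℕ) (hr : 0 < r) :
    RD r = 3 * (Nat.log 2 r + 1) ∧
    ∀ (X : Finset ℕ) (S T : Multiset (Finset (Finset ℕ))),
      Multiset.card S = r → Multiset.card T = r →
      (∀ C ∈ S, IsRBT X C) → (∀ C ∈ T, IsRBT X C) → S ≠ T →
      ∃ K ⊆ X, K.card ≤ 3 * (Nat.log 2 r + 1) ∧
        S.map (fun C => restrictR C K) ≠ T.map (fun C => restrictR C K) := by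
  constructor
  · rw [RD]
    have hub : ∀ d ∈ {d | ∃ n : ℕ, ∃ S T : Multiset (Finset (Finset ℕ)),
        Multiset.card S = r ∧ Multiset.card T = r ∧
        (∀ C ∈ S, IsRBT (Finset.range n) C) ∧ (∀ C ∈ T, IsRBT (Finset.range n) C) ∧
        S ≠ T ∧ d = rootedDisentDist (Finset.range n) S T},
        d ≤ 3 * (Nat.log 2 r + 1) := by
      rintro d ⟨n, S, T, hScard, hTcard, hSrbt, hTrbt, hne, rfl⟩
      obtain ⟨K, hKX, hKcard, hKdis⟩ :=
        upper_general r hr (Finset.range n) S T hScard hTcard hSrbt hTrbt hne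
      have : rootedDisentDist (Finset.range n) S T ≤ K.card :=
        Nat.sInf_le ⟨K, hKX, rfl, hKdis⟩
      omega
    have hmem : 3 * (Nat.log 2 r + 1) ∈ {d | ∃ n : ℕ,
        ∃ S T : Multiset (Finset (Finset ℕ)),
        Multiset.card S = r ∧ Multiset.card T = r ∧
        (∀ C ∈ S, IsRBT (Finset.range n) C) ∧ (∀ C ∈ T, IsRBT (Finset.range n) C) ∧
        S ≠ T ∧ d = rootedDisentDist (Finset.range n) S T} :=
      ⟨3*(Nat.log 2 r + 1), Sfull r, Tfull r, card_Sfull r hr, card_Tfull r hr,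
        Sfull_rbt r, Tfull_rbt r, Sfull_ne_Tfull r, (dist_eq r hr).symm⟩
    exact le_antisymm (csSup_le ⟨_, hmem⟩ hub) (le_csSup ⟨_, hub⟩ hmem)
  · intro X S T hScard hTcard hSrbt hTrbt hne
    exact upper_general r hr X S T hScard hTcard hSrbt hTrbt hne
end

section
/- The unrooted disentangling number is at most one more than the rooted disentangling number: D(r) ≤ RD(r) + 1 for all r ∈ ℕ. -/
/-- An unrooted binary leaf-labelled tree on the label set `X`, encoded by its
split system: the collection of sides of edge-induced bipartitions of `X`.
The collection is closed under complementation, pairwise compatible, contains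
all trivial (singleton) splits, and has the cardinality `2·(2|X| - 3)` forced
by a binary (trivalent) tree. -/
def IsUBT (X : Finset ℕ) (S : Finset (Finset ℕ)) : Prop :=
  (∀ A ∈ S, A ⊆ X ∧ A.Nonempty ∧ (X \ A).Nonempty) ∧
  (∀ A ∈ S, X \ A ∈ S) ∧
  (∀ x ∈ X, {x} ∈ S) ∧
  (∀ A ∈ S, ∀ B ∈ S, A ∩ B = ∅ ∨ A ⊆ B ∨ B ⊆ A ∨ X ⊆ A ∪ B) ∧
  S.card = 4 * X.card - 6

/-- The restriction `T|K` of an unrooted leaf-labelled tree to a subset `K` of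
its leaves, in split encoding: intersections of split sides with `K` that give
a nonempty proper part of `K`. -/
def restrictU (S : Finset (Finset ℕ)) (K : Finset ℕ) : Finset (Finset ℕ) :=
  (S.image (· ∩ K)).filter (fun B => B.Nonempty ∧ B ≠ K)

/-- `K` disentangles the multisets `S` and `T` of unrooted trees if the
multisets of restrictions to `K` differ. -/
def UDisentangles (S T : Multiset (Finset (Finset ℕ))) (K : Finset ℕ) : Prop :=
  S.map (fun A => restrictU A K) ≠ T.map (fun A => restrictU A K)

/-- The minimum cardinality of a disentangling set for two multisets of
unrooted trees on the leaf set `X`. -/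
noncomputable def disentDist (X : Finset ℕ) (S T : Multiset (Finset (Finset ℕ))) : ℕ :=
  sInf {m | ∃ K ⊆ X, K.card = m ∧ UDisentangles S T K}

/-- The (unrooted) disentangling number `D(r)`: the maximum over all `n` and all
pairs of distinct `r`-multisets of unrooted binary leaf-labelled trees on `[n]`
of the minimum cardinality of a disentangling set. -/
noncomputable def D (r : ℕ) : ℕ :=
  sSup {d | ∃ n : ℕ, ∃ S T : Multiset (Finset (Finset ℕ)),
    Multiset.card S = r ∧ Multiset.card T = r ∧
    (∀ A ∈ S, IsUBT (Finset.range n) A) ∧ (∀ A ∈ T, IsUBT (Finset.range n) A) ∧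
    S ≠ T ∧ d = disentDist (Finset.range n) S T}


/-!
Rooting an unrooted binary tree at a leaf `x`, i.e. keeping the split sides that avoid `x`, is a
bijection onto the rooted binary trees on the remaining leaves, with inverse "attach `x` above the
root". Rooting commutes with restriction: the tree rooted at `x` and restricted to `K` is the tree
restricted to `K ∪ {x}` and then rooted at `x`. So a rooted disentangling set `K` of the rooted
multisets yields the unrooted disentangling set `K ∪ {x}`, and every value of `D r` is at most one
more than a value of `RD r`. Conversely unrooting bounds every value of `RD r` by a value of `D r`;
this is needed because in `ℕ` the supremum of an unbounded set is `0`.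

In both encodings binarity is a counting condition: a hierarchy on `X` has `|L| - 1` parent-child
pairs and every non-singleton has at least two children, so `|L| ≤ 2|X| - 1`, with equality exactly
when every non-singleton cluster is the union of two children.
-/

section Hierarchy

variable {α : Type*} [DecidableEq α]

structure IsHierarchy (X : Finset α) (L : Finset (Finset α)) : Prop where
  top_mem : X ∈ L
  singleton_mem : ∀ x ∈ X, {x} ∈ L
  subset_nonempty : ∀ A ∈ L, A ⊆ X ∧ A.Nonempty
  laminar : ∀ A ∈ L, ∀ B ∈ L, A ∩ B = ∅ ∨ A ⊆ B ∨ B ⊆ A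

def children (L : Finset (Finset α)) (P : Finset α) : Finset (Finset α) :=
  L.filter fun A => A ⊂ P ∧ ∀ B ∈ L, A ⊂ B → ¬B ⊂ P

theorem mem_children {L : Finset (Finset α)} {A P : Finset α} :
    A ∈ children L P ↔ A ∈ L ∧ A ⊂ P ∧ ∀ B ∈ L, A ⊂ B → ¬B ⊂ P :=
  Finset.mem_filter

namespace IsHierarchy

variable {X : Finset α} {L : Finset (Finset α)} {A P : Finset α}

theorem exists_mem_children (h : IsHierarchy X L) (hA : A ∈ L) (hAX : A ≠ X) :
    ∃ P ∈ L, A ∈ children L P := by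
  have hne : (L.filter (A ⊂ ·)).Nonempty :=
    ⟨X, Finset.mem_filter.2 ⟨h.top_mem, (h.subset_nonempty A hA).1.ssubset_of_ne hAX⟩⟩
  obtain ⟨P, hPmin⟩ := Finset.exists_minimal hne
  obtain ⟨hP, hAP⟩ := Finset.mem_filter.1 hPmin.prop
  exact ⟨P, hP, mem_children.2 ⟨hA, hAP, fun B hB hAB hBP =>
    hBP.not_subset (hPmin.le_of_le (Finset.mem_filter.2 ⟨hB, hAB⟩) hBP.subset)⟩⟩

theorem eq_of_mem_children (h : IsHierarchy X L) {P' : Finset α} (hP : P ∈ L) (hP' : P' ∈ L)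
    (hAP : A ∈ children L P) (hAP' : A ∈ children L P') : P = P' := by
  obtain ⟨hA, hAP, hmax⟩ := mem_children.1 hAP
  obtain ⟨-, hAP', hmax'⟩ := mem_children.1 hAP'
  obtain ⟨a, ha⟩ := (h.subset_nonempty A hA).2
  rcases h.laminar P hP P' hP' with hdisj | hsub | hsub
  · simpa [hdisj] using Finset.mem_inter.2 ⟨hAP.subset ha, hAP'.subset ha⟩
  · by_contra hne
    exact hmax' P hP hAP (hsub.ssubset_of_ne hne)
  · by_contra hne
    exact hmax P' hP' hAP' (hsub.ssubset_of_ne (Ne.symm hne))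

theorem biUnion_children (h : IsHierarchy X L) : L.biUnion (children L) = L.erase X := by
  ext A
  simp only [Finset.mem_biUnion, Finset.mem_erase]
  constructor
  · rintro ⟨P, hP, hAP⟩
    obtain ⟨hA, hAP, -⟩ := mem_children.1 hAP
    exact ⟨(hAP.trans_subset (h.subset_nonempty P hP).1).ne, hA⟩
  · rintro ⟨hAX, hA⟩
    exact h.exists_mem_children hA hAX

theorem sum_card_children (h : IsHierarchy X L) :
    ∑ P ∈ L, (children L P).card = L.card - 1 := by
  rw [← Finset.card_biUnion, h.biUnion_children, Finset.card_erase_of_mem h.top_mem]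
  intro P hP P' hP' hne
  exact Finset.disjoint_left.2 fun A hA hA' => hne (h.eq_of_mem_children hP hP' hA hA')

theorem children_eq_empty (h : IsHierarchy X L) (hP : P.card < 2) : children L P = ∅ := by
  refine Finset.eq_empty_of_forall_notMem fun A hA => ?_
  obtain ⟨hA, hAP, -⟩ := mem_children.1 hA
  have := Finset.card_lt_card hAP
  have := (h.subset_nonempty A hA).2.card_pos
  omega

theorem exists_mem_children_of_mem (h : IsHierarchy X L) (hP : P ∈ L) (hP2 : 2 ≤ P.card)
    {y : α} (hy : y ∈ P) : ∃ A ∈ children L P, y ∈ A := by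
  have hyP : {y} ⊂ P := by
    refine (Finset.singleton_subset_iff.2 hy).ssubset_of_ne ?_
    rintro rfl
    simp at hP2
  have hne : (L.filter fun A => y ∈ A ∧ A ⊂ P).Nonempty :=
    ⟨{y}, Finset.mem_filter.2
      ⟨h.singleton_mem y ((h.subset_nonempty P hP).1 hy), Finset.mem_singleton_self y, hyP⟩⟩
  obtain ⟨A, hAmax⟩ := Finset.exists_maximal hne
  obtain ⟨hA, hyA, hAP⟩ := Finset.mem_filter.1 hAmax.prop
  refine ⟨A, mem_children.2 ⟨hA, hAP, fun B hB hAB hBP => ?_⟩, hyA⟩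
  exact hAB.not_subset (hAmax.le_of_ge (Finset.mem_filter.2 ⟨hB, hAB.subset hyA, hBP⟩) hAB.subset)

theorem two_le_card_children (h : IsHierarchy X L) (hP : P ∈ L) (hP2 : 2 ≤ P.card) :
    2 ≤ (children L P).card := by
  obtain ⟨y, hy⟩ := (h.subset_nonempty P hP).2
  obtain ⟨A, hA, hyA⟩ := h.exists_mem_children_of_mem hP hP2 hy
  obtain ⟨z, hzP, hzA⟩ := Finset.exists_of_ssubset (mem_children.1 hA).2.1
  obtain ⟨A', hA', hzA'⟩ := h.exists_mem_children_of_mem hP hP2 hzP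
  exact Finset.one_lt_card.2 ⟨A, hA, A', hA', by rintro rfl; exact hzA hzA'⟩

theorem card_children_eq_two_iff (h : IsHierarchy X L) (hP : P ∈ L) (hP2 : 2 ≤ P.card) :
    (children L P).card = 2 ↔
      ∃ B ∈ L, ∃ D ∈ L, Disjoint B D ∧ B ∪ D = P ∧ B ≠ P ∧ D ≠ P := by
  constructor
  · intro hcard
    obtain ⟨B, D, hBD, hchildren⟩ := Finset.card_eq_two.1 hcard
    have hB : B ∈ children L P := by simp [hchildren]
    have hD : D ∈ children L P := by simp [hchildren]
    obtain ⟨hBL, hBP, hBmax⟩ := mem_children.1 hB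
    obtain ⟨hDL, hDP, hDmax⟩ := mem_children.1 hD
    refine ⟨B, hBL, D, hDL, ?_, ?_, hBP.ne, hDP.ne⟩
    · rcases h.laminar B hBL D hDL with hdisj | hsub | hsub
      · exact Finset.disjoint_iff_inter_eq_empty.2 hdisj
      · exact absurd hDP (hBmax D hDL (hsub.ssubset_of_ne hBD))
      · exact absurd hBP (hDmax B hBL (hsub.ssubset_of_ne hBD.symm))
    · refine (Finset.union_subset hBP.subset hDP.subset).antisymm fun y hy => ?_
      obtain ⟨A, hA, hyA⟩ := h.exists_mem_children_of_mem hP hP2 hy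
      rw [hchildren, Finset.mem_insert, Finset.mem_singleton] at hA
      rcases hA with rfl | rfl <;> simp [hyA]
  · rintro ⟨B, hBL, D, hDL, -, hunion, hBP, hDP⟩
    refine le_antisymm ?_ (h.two_le_card_children hP hP2)
    refine (Finset.card_le_card (t := {B, D}) fun A hA => ?_).trans Finset.card_le_two
    obtain ⟨hA, hAP, hmax⟩ := mem_children.1 hA
    have hBP' : B ⊂ P := (hunion ▸ Finset.subset_union_left).ssubset_of_ne hBP
    have hDP' : D ⊂ P := (hunion ▸ Finset.subset_union_right).ssubset_of_ne hDP
    have hAsub : A ⊆ B ∪ D := hunion ▸ hAP.subset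
    have eq_of_subset : ∀ C ∈ L, C ⊂ P → A ⊆ C → A = C := fun C hC hCP hAC =>
      by_contra fun hne => hmax C hC (hAC.ssubset_of_ne hne) hCP
    rcases h.laminar A hA B hBL with hAB | hAB | hBA
    · have hAD := (Finset.disjoint_iff_inter_eq_empty.2 hAB).left_le_of_le_sup_left hAsub
      simp [eq_of_subset D hDL hDP' hAD]
    · simp [eq_of_subset B hBL hBP' hAB]
    rcases h.laminar A hA D hDL with hAD | hAD | hDA
    · have hAB := (Finset.disjoint_iff_inter_eq_empty.2 hAD).left_le_of_le_sup_right hAsub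
      simp [eq_of_subset B hBL hBP' hAB]
    · simp [eq_of_subset D hDL hDP' hAD]
    · exact absurd (hunion ▸ Finset.union_subset hBA hDA) hAP.not_subset


theorem card_filter_card_lt_two (h : IsHierarchy X L) :
    (L.filter fun P => P.card < 2).card = X.card := by
  have : L.filter (fun P => P.card < 2) = X.image ({·}) := by
    ext P
    simp only [Finset.mem_filter, Finset.mem_image]
    constructor
    · rintro ⟨hP, hP2⟩
      obtain ⟨x, rfl⟩ := Finset.card_eq_one.1
        (le_antisymm (Nat.lt_succ_iff.1 hP2) (h.subset_nonempty P hP).2.card_pos)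
      exact ⟨x, (h.subset_nonempty _ hP).1 (Finset.mem_singleton_self x), rfl⟩
    · rintro ⟨x, hx, rfl⟩
      exact ⟨h.singleton_mem x hx, by simp⟩
  rw [this, Finset.card_image_of_injective _ Finset.singleton_injective]

theorem card_eq_two_mul_sub_one_iff (h : IsHierarchy X L) :
    L.card = 2 * X.card - 1 ↔
      ∀ A ∈ L, 2 ≤ A.card → ∃ B ∈ L, ∃ D ∈ L, Disjoint B D ∧ B ∪ D = A ∧ B ≠ A ∧ D ≠ A := by
  set g : Finset α → ℕ := fun P => if 2 ≤ P.card then 2 else 0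
  have hle : ∀ P ∈ L, g P ≤ (children L P).card := fun P hP => by
    by_cases hP2 : 2 ≤ P.card
    · simpa [g, hP2] using h.two_le_card_children hP hP2
    · simp [g, hP2]
  have hsum_g : ∑ P ∈ L, g P = 2 * (L.card - X.card) := by
    have := Finset.card_filter_add_card_filter_not (s := L) (fun P => 2 ≤ P.card)
    simp only [not_le, h.card_filter_card_lt_two] at this
    simp [g, Finset.sum_ite, ← this, mul_comm]
  have hL : 1 ≤ L.card := Finset.card_pos.2 ⟨X, h.top_mem⟩
  have hXL : X.card ≤ L.card := h.card_filter_card_lt_two ▸ Finset.card_filter_le _ _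
  have hX : 1 ≤ X.card := (h.subset_nonempty X h.top_mem).2.card_pos
  calc L.card = 2 * X.card - 1 ↔ ∑ P ∈ L, g P = ∑ P ∈ L, (children L P).card := by
        rw [hsum_g, h.sum_card_children]; omega
    _ ↔ ∀ P ∈ L, g P = (children L P).card := Finset.sum_eq_sum_iff_of_le hle
    _ ↔ _ := by
        refine forall₂_congr fun P hP => ?_
        by_cases hP2 : 2 ≤ P.card
        · simpa [g, hP2, eq_comm] using h.card_children_eq_two_iff hP hP2
        · simp [g, hP2, h.children_eq_empty (not_le.1 hP2)]

end IsHierarchy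

def SplitCompatible (X A B : Finset α) : Prop :=
  A ∩ B = ∅ ∨ A ⊆ B ∨ B ⊆ A ∨ X ⊆ A ∪ B

namespace SplitCompatible

variable {X A B : Finset α}

theorem symm (h : SplitCompatible X A B) : SplitCompatible X B A := by
  unfold SplitCompatible at *
  rw [Finset.inter_comm, Finset.union_comm]
  tauto

theorem sdiff_left (hB : B ⊆ X) (h : SplitCompatible X A B) :
    SplitCompatible X (X \ A) B := by
  simp only [SplitCompatible, ← Finset.disjoint_iff_inter_eq_empty] at *
  grind [Finset.disjoint_left]

theorem sdiff_right (hA : A ⊆ X) (h : SplitCompatible X A B) :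
    SplitCompatible X A (X \ B) :=
  (h.symm.sdiff_left hA).symm

end SplitCompatible

end Hierarchy

namespace Multiset

variable {α β γ : Type*}

theorem map_eq_map_of_factor {S T : Multiset α} {f : α → β}
    {g : α → γ} (φ : γ → β) (hS : ∀ a ∈ S, f a = φ (g a)) (hT : ∀ a ∈ T, f a = φ (g a))
    (h : S.map g = T.map g) : S.map f = T.map f := by
  rw [map_congr rfl hS, map_congr rfl hT]
  simpa only [map_map, Function.comp_def] using congrArg (map φ) h

theorem map_ne_map_of_leftInverse {S T : Multiset α} {f : α → β}
    (g : β → α) (hS : ∀ a ∈ S, g (f a) = a) (hT : ∀ a ∈ T, g (f a) = a) (h : S ≠ T) :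
    S.map f ≠ T.map f := fun he => h <| by
  simpa using map_eq_map_of_factor (f := id) g (fun a ha => (hS a ha).symm)
    (fun a ha => (hT a ha).symm) he

end Multiset

theorem isRBT_iff {X : Finset ℕ} {C : Finset (Finset ℕ)} :
    IsRBT X C ↔ IsHierarchy X C ∧ C.card = 2 * X.card - 1 := by
  constructor
  · rintro ⟨htop, hsing, hsub, hlam, hsplit⟩
    have h : IsHierarchy X C := ⟨htop, hsing, hsub, hlam⟩
    exact ⟨h, h.card_eq_two_mul_sub_one_iff.2 hsplit⟩
  · rintro ⟨h, hcard⟩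
    exact ⟨h.top_mem, h.singleton_mem, h.subset_nonempty, h.laminar,
      h.card_eq_two_mul_sub_one_iff.1 hcard⟩

section Rooting

def rootify (x : ℕ) (A : Finset (Finset ℕ)) : Finset (Finset ℕ) :=
  A.filter (x ∉ ·)

def unrootify (X : Finset ℕ) (C : Finset (Finset ℕ)) : Finset (Finset ℕ) :=
  C ∪ C.image (X \ ·)

variable {X Y K : Finset ℕ} {x : ℕ} {A C : Finset (Finset ℕ)}

theorem mem_unrootify {B : Finset ℕ} : B ∈ unrootify X C ↔ B ∈ C ∨ ∃ E ∈ C, X \ E = B := by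
  simp [unrootify]

theorem card_unrootify (hx : x ∈ X) (hC : ∀ E ∈ C, E ⊆ X ∧ x ∉ E) :
    (unrootify X C).card = 2 * C.card := by
  have hdisj : Disjoint C (C.image (X \ ·)) := by
    refine Finset.disjoint_left.2 fun E hE hE' => ?_
    obtain ⟨F, hF, rfl⟩ := Finset.mem_image.1 hE'
    exact (hC _ hE).2 (Finset.mem_sdiff.2 ⟨hx, (hC F hF).2⟩)
  have hinj : Set.InjOn (X \ ·) C := fun E hE F hF hEF => by
    rw [← Finset.sdiff_sdiff_eq_self (hC E hE).1, ← Finset.sdiff_sdiff_eq_self (hC F hF).1]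
    exact congrArg (X \ ·) hEF
  rw [unrootify, Finset.card_union_of_disjoint hdisj, Finset.card_image_of_injOn hinj, two_mul]

theorem unrootify_rootify (h : IsUBT X A) : unrootify X (rootify x A) = A := by
  ext B
  simp only [mem_unrootify, rootify, Finset.mem_filter]
  constructor
  · rintro (⟨hB, -⟩ | ⟨E, ⟨hE, -⟩, rfl⟩)
    · exact hB
    · exact h.2.1 E hE
  · intro hB
    by_cases hxB : x ∈ B
    · refine Or.inr ⟨X \ B, ⟨h.2.1 B hB, fun hx => (Finset.mem_sdiff.1 hx).2 hxB⟩, ?_⟩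
      exact Finset.sdiff_sdiff_eq_self (h.1 B hB).1
    · exact Or.inl ⟨hB, hxB⟩

theorem rootify_unrootify (hx : x ∈ X) (hC : ∀ E ∈ C, x ∉ E) :
    rootify x (unrootify X C) = C := by
  ext B
  simp only [rootify, Finset.mem_filter, mem_unrootify]
  constructor
  · rintro ⟨hB | ⟨E, hE, rfl⟩, hxB⟩
    · exact hB
    · exact absurd (Finset.mem_sdiff.2 ⟨hx, hC E hE⟩) hxB
  · intro hB
    exact ⟨Or.inl hB, hC B hB⟩

theorem isRBT_rootify (h : IsUBT X A) (hx : x ∈ X) : IsRBT (X.erase x) (rootify x A) := by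
  have hsub : ∀ B ∈ rootify x A, B ⊆ X.erase x ∧ B.Nonempty := fun B hB => by
    obtain ⟨hB, hxB⟩ := Finset.mem_filter.1 hB
    exact ⟨fun y hy => Finset.mem_erase.2 ⟨fun hyx => hxB (hyx ▸ hy), (h.1 B hB).1 hy⟩,
      (h.1 B hB).2.1⟩
  have hier : IsHierarchy (X.erase x) (rootify x A) := by
    refine ⟨?_, fun y hy => ?_, hsub, fun B hB B' hB' => ?_⟩
    · refine Finset.mem_filter.2 ⟨?_, fun hx' => (Finset.mem_erase.1 hx').1 rfl⟩
      rw [← Finset.sdiff_singleton_eq_erase]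
      exact h.2.1 _ (h.2.2.1 x hx)
    · refine Finset.mem_filter.2 ⟨h.2.2.1 y (Finset.mem_of_mem_erase hy), ?_⟩
      simpa [eq_comm] using Finset.ne_of_mem_erase hy
    · obtain ⟨hB, hxB⟩ := Finset.mem_filter.1 hB
      obtain ⟨hB', hxB'⟩ := Finset.mem_filter.1 hB'
      rcases h.2.2.2.1 B hB B' hB' with h' | h' | h' | h'
      · exact Or.inl h'
      · exact Or.inr (Or.inl h')
      · exact Or.inr (Or.inr h')
      · exact absurd (h' hx) (by simp [hxB, hxB'])
  have hcard := card_unrootify (C := rootify x A) hx fun E hE =>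
    ⟨(hsub E hE).1.trans (Finset.erase_subset x X), (Finset.mem_filter.1 hE).2⟩
  rw [unrootify_rootify h, h.2.2.2.2] at hcard
  rw [isRBT_iff, Finset.card_erase_of_mem hx]
  exact ⟨hier, by omega⟩

theorem IsRBT.notMem (h : IsRBT Y C) (hx : x ∉ Y) {E : Finset ℕ} (hE : E ∈ C) : x ∉ E :=
  fun hxE => hx ((h.2.2.1 E hE).1 hxE)

theorem splitCompatible_of_mem_unrootify (h : IsHierarchy Y C) (hYX : Y ⊆ X)
    {B B' : Finset ℕ} (hB : B ∈ unrootify X C) (hB' : B' ∈ unrootify X C) :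
    SplitCompatible X B B' := by
  have hsub : ∀ E ∈ C, E ⊆ X := fun E hE => (h.subset_nonempty E hE).1.trans hYX
  have hlam : ∀ E ∈ C, ∀ F ∈ C, SplitCompatible X E F := fun E hE F hF => by
    rcases h.laminar E hE F hF with h' | h' | h'
    · exact Or.inl h'
    · exact Or.inr (Or.inl h')
    · exact Or.inr (Or.inr (Or.inl h'))
  rcases mem_unrootify.1 hB with hB | ⟨E, hE, rfl⟩ <;>
    rcases mem_unrootify.1 hB' with hB' | ⟨F, hF, rfl⟩
  · exact hlam B hB B' hB'
  · exact (hlam B hB F hF).sdiff_right (hsub B hB)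
  · exact (hlam E hE B' hB').sdiff_left (hsub B' hB')
  · exact ((hlam E hE F hF).sdiff_left (hsub F hF)).sdiff_right Finset.sdiff_subset

theorem isUBT_unrootify (h : IsRBT Y C) (hx : x ∉ Y) :
    IsUBT (insert x Y) (unrootify (insert x Y) C) := by
  obtain ⟨hier, hcard⟩ := isRBT_iff.1 h
  have hsub : ∀ E ∈ C, E ⊆ insert x Y ∧ x ∉ E := fun E hE =>
    ⟨(hier.subset_nonempty E hE).1.trans (Finset.subset_insert x Y), h.notMem hx hE⟩
  have hx_mem : ∀ E ∈ C, x ∈ insert x Y \ E := fun E hE =>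
    Finset.mem_sdiff.2 ⟨Finset.mem_insert_self x Y, (hsub E hE).2⟩
  refine ⟨fun B hB => ?_, fun B hB => ?_, fun y hy => ?_, fun B hB B' hB' => ?_, ?_⟩
  · rcases mem_unrootify.1 hB with hB | ⟨E, hE, rfl⟩
    · exact ⟨(hsub B hB).1, (hier.subset_nonempty B hB).2, ⟨x, hx_mem B hB⟩⟩
    · rw [Finset.sdiff_sdiff_eq_self (hsub E hE).1]
      exact ⟨Finset.sdiff_subset, ⟨x, hx_mem E hE⟩, (hier.subset_nonempty E hE).2⟩
  · rcases mem_unrootify.1 hB with hB | ⟨E, hE, rfl⟩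
    · exact mem_unrootify.2 (Or.inr ⟨B, hB, rfl⟩)
    · rw [Finset.sdiff_sdiff_eq_self (hsub E hE).1]
      exact mem_unrootify.2 (Or.inl hE)
  · rcases Finset.mem_insert.1 hy with rfl | hy
    · exact mem_unrootify.2 (Or.inr ⟨Y, hier.top_mem, Finset.insert_sdiff_cancel hx⟩)
    · exact mem_unrootify.2 (Or.inl (hier.singleton_mem y hy))
  · exact splitCompatible_of_mem_unrootify hier (Finset.subset_insert x Y) hB hB'
  · have hY : 1 ≤ Y.card := (hier.subset_nonempty Y hier.top_mem).2.card_pos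
    rw [card_unrootify (Finset.mem_insert_self x Y) hsub, hcard, Finset.card_insert_of_notMem hx]
    omega

theorem restrictR_rootify (hx : x ∉ K) :
    restrictR (rootify x A) K = rootify x (restrictU A (insert x K)) := by
  ext E
  simp only [restrictR, restrictU, rootify, Finset.mem_filter, Finset.mem_image]
  constructor
  · rintro ⟨⟨B, ⟨hB, hxB⟩, rfl⟩, hne⟩
    have hxE : x ∉ B ∩ K := fun h' => hx (Finset.mem_inter.1 h').2
    refine ⟨⟨⟨B, hB, Finset.inter_insert_of_notMem hxB⟩, hne, ?_⟩, hxE⟩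
    rintro h'
    exact hxE (h' ▸ Finset.mem_insert_self x K)
  · rintro ⟨⟨⟨B, hB, rfl⟩, hne, -⟩, hxE⟩
    have hxB : x ∉ B := fun h' => hxE (Finset.mem_inter.2 ⟨h', Finset.mem_insert_self x K⟩)
    exact ⟨⟨B, ⟨hB, hxB⟩, (Finset.inter_insert_of_notMem hxB).symm⟩, hne⟩

theorem restrictU_unrootify (hK : K ⊆ X) (hC : ∀ E ∈ C, x ∉ E) :
    restrictU (unrootify X C) K =
      (unrootify K (restrictR C (K.erase x))).filter fun B => B.Nonempty ∧ B ≠ K := by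
  have hinter : ∀ E ∈ C, E ∩ K.erase x = E ∩ K := fun E hE => by
    rw [Finset.inter_erase, Finset.erase_eq_of_notMem fun h' => hC E hE (Finset.mem_inter.1 h').1]
  have hsdiff : ∀ E ∈ C, (X \ E) ∩ K = K \ (E ∩ K.erase x) := fun E hE => by
    rw [hinter E hE]
    ext y
    simp only [Finset.mem_inter, Finset.mem_sdiff]
    exact ⟨fun ⟨⟨_, hyE⟩, hyK⟩ => ⟨hyK, fun h' => hyE h'.1⟩,
      fun ⟨hyK, hyE⟩ => ⟨⟨hK hyK, fun h' => hyE ⟨h', hyK⟩⟩, hyK⟩⟩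
  ext B
  simp only [restrictU, restrictR, Finset.mem_filter, Finset.mem_image, mem_unrootify]
  refine and_congr_left fun ⟨hne, hBK⟩ => ⟨?_, ?_⟩
  · rintro ⟨G, hG | ⟨E, hE, rfl⟩, rfl⟩
    · exact Or.inl ⟨⟨G, hG, hinter G hG⟩, hne⟩
    · refine Or.inr ⟨E ∩ K.erase x, ⟨⟨E, hE, rfl⟩, ?_⟩, (hsdiff E hE).symm⟩
      rw [Finset.nonempty_iff_ne_empty]
      intro h0
      exact hBK (by rw [hsdiff E hE, h0, Finset.sdiff_empty])
  · rintro (⟨⟨G, hG, rfl⟩, -⟩ | ⟨_, ⟨⟨E, hE, rfl⟩, -⟩, rfl⟩)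
    · exact ⟨G, Or.inl hG, (hinter G hG).symm⟩
    · exact ⟨X \ E, Or.inr ⟨E, hE, rfl⟩, hsdiff E hE⟩

theorem UDisentangles.of_rootify {S T : Multiset (Finset (Finset ℕ))} (hx : x ∉ K)
    (h : RDisentangles (S.map (rootify x)) (T.map (rootify x)) K) :
    UDisentangles S T (insert x K) := fun he => h <| by
  simp only [Multiset.map_map]
  exact Multiset.map_eq_map_of_factor (rootify x) (fun _ _ => restrictR_rootify hx)
    (fun _ _ => restrictR_rootify hx) he

theorem RDisentangles.of_unrootify {S T : Multiset (Finset (Finset ℕ))} (hK : K ⊆ X)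
    (hS : ∀ C ∈ S, ∀ E ∈ C, x ∉ E) (hT : ∀ C ∈ T, ∀ E ∈ C, x ∉ E)
    (h : UDisentangles (S.map (unrootify X)) (T.map (unrootify X)) K) :
    RDisentangles S T (K.erase x) := fun he => h <| by
  simp only [Multiset.map_map]
  exact Multiset.map_eq_map_of_factor (fun Q => (unrootify K Q).filter fun B => B.Nonempty ∧ B ≠ K)
    (fun C hC => restrictU_unrootify hK (hS C hC)) (fun C hC => restrictU_unrootify hK (hT C hC)) he

theorem restrictR_self (h : ∀ B ∈ C, B ⊆ X ∧ B.Nonempty) : restrictR C X = C := by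
  ext E
  simp only [restrictR, Finset.mem_filter, Finset.mem_image]
  constructor
  · rintro ⟨⟨B, hB, rfl⟩, -⟩
    rwa [Finset.inter_eq_left.2 (h B hB).1]
  · exact fun hE => ⟨⟨E, hE, Finset.inter_eq_left.2 (h E hE).1⟩, (h E hE).2⟩

theorem restrictU_self (h : ∀ B ∈ A, B ⊆ X ∧ B.Nonempty ∧ (X \ B).Nonempty) :
    restrictU A X = A := by
  ext E
  simp only [restrictU, Finset.mem_filter, Finset.mem_image]
  constructor
  · rintro ⟨⟨B, hB, rfl⟩, -⟩
    rwa [Finset.inter_eq_left.2 (h B hB).1]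
  · intro hE
    refine ⟨⟨E, hE, Finset.inter_eq_left.2 (h E hE).1⟩, (h E hE).2.1, ?_⟩
    rintro rfl
    simpa using (h _ hE).2.2

section Distance

variable {S T : Multiset (Finset (Finset ℕ))}

theorem rootedDisentDist_le (hK : K ⊆ X) (h : RDisentangles S T K) :
    rootedDisentDist X S T ≤ K.card :=
  Nat.sInf_le ⟨K, hK, rfl, h⟩

theorem disentDist_le (hK : K ⊆ X) (h : UDisentangles S T K) : disentDist X S T ≤ K.card :=
  Nat.sInf_le ⟨K, hK, rfl, h⟩

theorem exists_rDisentangles_card_eq (hS : ∀ C ∈ S, IsRBT X C) (hT : ∀ C ∈ T, IsRBT X C)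
    (hST : S ≠ T) : ∃ K ⊆ X, K.card = rootedDisentDist X S T ∧ RDisentangles S T K :=
  Nat.sInf_mem (s := {m | ∃ K ⊆ X, K.card = m ∧ RDisentangles S T K})
    ⟨X.card, X, subset_rfl, rfl, fun he => hST <| by
      simpa using Multiset.map_eq_map_of_factor (f := id) id
        (fun C hC => (restrictR_self (hS C hC).2.2.1).symm)
        (fun C hC => (restrictR_self (hT C hC).2.2.1).symm) he⟩

theorem exists_uDisentangles_card_eq (hS : ∀ A ∈ S, IsUBT X A) (hT : ∀ A ∈ T, IsUBT X A)
    (hST : S ≠ T) : ∃ K ⊆ X, K.card = disentDist X S T ∧ UDisentangles S T K :=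
  Nat.sInf_mem (s := {m | ∃ K ⊆ X, K.card = m ∧ UDisentangles S T K})
    ⟨X.card, X, subset_rfl, rfl, fun he => hST <| by
      simpa using Multiset.map_eq_map_of_factor (f := id) id
        (fun A hA => (restrictU_self (hS A hA).1).symm)
        (fun A hA => (restrictU_self (hT A hA).1).symm) he⟩

theorem map_rootify_ne (hS : ∀ A ∈ S, IsUBT X A) (hT : ∀ A ∈ T, IsUBT X A) (hST : S ≠ T) :
    S.map (rootify x) ≠ T.map (rootify x) :=
  Multiset.map_ne_map_of_leftInverse (unrootify X)
    (fun A hA => unrootify_rootify (hS A hA)) (fun A hA => unrootify_rootify (hT A hA)) hST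

theorem map_unrootify_ne (hS : ∀ C ∈ S, IsRBT Y C) (hT : ∀ C ∈ T, IsRBT Y C) (hST : S ≠ T)
    (hx : x ∉ Y) : S.map (unrootify (insert x Y)) ≠ T.map (unrootify (insert x Y)) :=
  Multiset.map_ne_map_of_leftInverse (rootify x)
    (fun C hC => rootify_unrootify (Finset.mem_insert_self x Y) fun _ => (hS C hC).notMem hx)
    (fun C hC => rootify_unrootify (Finset.mem_insert_self x Y) fun _ => (hT C hC).notMem hx) hST

theorem disentDist_le_rootedDisentDist_rootify (hS : ∀ A ∈ S, IsUBT X A)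
    (hT : ∀ A ∈ T, IsUBT X A) (hST : S ≠ T) (hx : x ∈ X) :
    disentDist X S T ≤
      rootedDisentDist (X.erase x) (S.map (rootify x)) (T.map (rootify x)) + 1 := by
  have hS' : ∀ C ∈ S.map (rootify x), IsRBT (X.erase x) C := by
    simpa using fun A hA => isRBT_rootify (hS A hA) hx
  have hT' : ∀ C ∈ T.map (rootify x), IsRBT (X.erase x) C := by
    simpa using fun A hA => isRBT_rootify (hT A hA) hx
  obtain ⟨K, hKX, hcard, hK⟩ := exists_rDisentangles_card_eq hS' hT' (map_rootify_ne hS hT hST)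
  have hxK : x ∉ K := fun h' => (Finset.mem_erase.1 (hKX h')).1 rfl
  calc disentDist X S T ≤ (insert x K).card :=
        disentDist_le (Finset.insert_subset hx (hKX.trans (Finset.erase_subset x X)))
          (UDisentangles.of_rootify hxK hK)
    _ ≤ K.card + 1 := Finset.card_insert_le x K
    _ = _ := by rw [hcard]

theorem rootedDisentDist_le_disentDist_unrootify (hS : ∀ C ∈ S, IsRBT Y C)
    (hT : ∀ C ∈ T, IsRBT Y C) (hST : S ≠ T) (hx : x ∉ Y) :
    rootedDisentDist Y S T ≤ disentDist (insert x Y)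
      (S.map (unrootify (insert x Y))) (T.map (unrootify (insert x Y))) := by
  have hS' : ∀ A ∈ S.map (unrootify (insert x Y)), IsUBT (insert x Y) A := by
    simpa using fun C hC => isUBT_unrootify (hS C hC) hx
  have hT' : ∀ A ∈ T.map (unrootify (insert x Y)), IsUBT (insert x Y) A := by
    simpa using fun C hC => isUBT_unrootify (hT C hC) hx
  obtain ⟨K, hKX, hcard, hK⟩ :=
    exists_uDisentangles_card_eq hS' hT' (map_unrootify_ne hS hT hST hx)
  calc rootedDisentDist Y S T ≤ (K.erase x).card :=
        rootedDisentDist_le (Finset.subset_insert_iff.1 hKX)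
          (RDisentangles.of_unrootify hKX (fun C hC _ => (hS C hC).notMem hx)
            (fun C hC _ => (hT C hC).notMem hx) hK)
    _ ≤ K.card := Finset.card_erase_le
    _ = _ := hcard

end Distance

end Rooting

def rootedDisentValues (r : ℕ) : Set ℕ :=
  {d | ∃ n : ℕ, ∃ S T : Multiset (Finset (Finset ℕ)),
    Multiset.card S = r ∧ Multiset.card T = r ∧
    (∀ C ∈ S, IsRBT (Finset.range n) C) ∧ (∀ C ∈ T, IsRBT (Finset.range n) C) ∧
    S ≠ T ∧ d = rootedDisentDist (Finset.range n) S T}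

def disentValues (r : ℕ) : Set ℕ :=
  {d | ∃ n : ℕ, ∃ S T : Multiset (Finset (Finset ℕ)),
    Multiset.card S = r ∧ Multiset.card T = r ∧
    (∀ A ∈ S, IsUBT (Finset.range n) A) ∧ (∀ A ∈ T, IsUBT (Finset.range n) A) ∧
    S ≠ T ∧ d = disentDist (Finset.range n) S T}

theorem exists_mem_disentValues_ge {r d : ℕ} (hd : d ∈ rootedDisentValues r) :
    ∃ d' ∈ disentValues r, d ≤ d' := by
  obtain ⟨n, S, T, hcS, hcT, hS, hT, hST, rfl⟩ := hd
  have hn : n ∉ Finset.range n := Finset.notMem_range_self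
  refine ⟨_, ⟨n + 1, S.map (unrootify (Finset.range (n + 1))),
    T.map (unrootify (Finset.range (n + 1))), by simp [hcS], by simp [hcT], ?_, ?_, ?_, rfl⟩, ?_⟩
    <;> simp only [Finset.range_add_one]
  · simpa using fun C hC => isUBT_unrootify (hS C hC) hn
  · simpa using fun C hC => isUBT_unrootify (hT C hC) hn
  · exact map_unrootify_ne hS hT hST hn
  · exact rootedDisentDist_le_disentDist_unrootify hS hT hST hn

theorem exists_mem_rootedDisentValues_add_one_ge {r d : ℕ} (hd : d ∈ disentValues r) :
    ∃ d' ∈ rootedDisentValues r, d ≤ d' + 1 := by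
  obtain ⟨n, S, T, hcS, hcT, hS, hT, hST, rfl⟩ := hd
  cases n with
  | zero =>
    have hempty : ∀ M : Multiset (Finset (Finset ℕ)), (∀ A ∈ M, IsUBT (Finset.range 0) A) →
        M = Multiset.replicate (Multiset.card M) ∅ := fun M hM =>
      Multiset.eq_replicate_card.2 fun A hA => Finset.eq_empty_of_forall_notMem fun B hB =>
        ((hM A hA).1 B hB).2.1.ne_empty (Finset.subset_empty.1 ((hM A hA).1 B hB).1)
    exact absurd (by rw [hempty S hS, hempty T hT, hcS, hcT]) hST
  | succ m =>
    have hm : m ∈ Finset.range (m + 1) := Finset.self_mem_range_succ m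
    have herase : (Finset.range (m + 1)).erase m = Finset.range m := by
      rw [Finset.range_add_one, Finset.erase_insert Finset.notMem_range_self]
    refine ⟨_, ⟨m, S.map (rootify m), T.map (rootify m), by simp [hcS], by simp [hcT],
      ?_, ?_, map_rootify_ne hS hT hST, rfl⟩, ?_⟩ <;> rw [← herase]
    · simpa using fun A hA => isRBT_rootify (hS A hA) hm
    · simpa using fun A hA => isRBT_rootify (hT A hA) hm
    · exact disentDist_le_rootedDisentDist_rootify hS hT hST hm

theorem bddAbove_rootedDisentValues {r : ℕ} (h : BddAbove (disentValues r)) :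
    BddAbove (rootedDisentValues r) :=
  ⟨sSup (disentValues r), fun d hd => by
    obtain ⟨d', hd', hle⟩ := exists_mem_disentValues_ge hd
    exact hle.trans (le_csSup h hd')⟩

/-- The unrooted disentangling number is at most one more than the rooted one:
`D(r) ≤ RD(r) + 1` for all `r`. -/
theorem disentangling_le_rooted_add_one (r : ℕ) : D r ≤ RD r + 1 := by
  change sSup (disentValues r) ≤ sSup (rootedDisentValues r) + 1
  by_cases hbdd : BddAbove (disentValues r)
  · rcases (disentValues r).eq_empty_or_nonempty with hempty | hne
    · simp [hempty]
    obtain ⟨d, hd, hle⟩ := exists_mem_rootedDisentValues_add_one_ge (Nat.sSup_mem hne hbdd)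
    exact hle.trans (Nat.add_le_add_right (le_csSup (bddAbove_rootedDisentValues hbdd) hd) 1)
  · simp [csSup_of_not_bddAbove hbdd]
end
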